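/- arXiv:1603.08099 — 9 statements merged into one kernel-verified Lean document; each statement's English description precedes it below -/
import Mathlib

section
/- In the heterogeneous HK dynamics, let c = lim x_min(t), r = min_i r_i, fix ε ∈ (0, r/n²), and let V¹_ε(t) = {i : c − ε < x_i(t) ≤ c + (n−1)ε}. Suppose at time T one has c − ε < x_min(T) ≤ c and |V¹_ε(T)| < n. Then there is no agent j ∉ V¹_ε(T) with c + (n−1)ε < x_j(T) ≤ c + r − ε; i.e., every agent j ∉ V¹_ε(T) satisfies x_j(T) > c + r − ε. -/
open Finset Filter Topology

/-- Neighbor set of agent `i` given confidence bounds `r` and opinion profile `y`. -/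
noncomputable def hkN {n : ℕ} (r : Fin n → ℝ) (y : Fin n → ℝ) (i : Fin n) : Finset (Fin n) :=
  Finset.univ.filter fun j => |y j - y i| ≤ r i

/-- The heterogeneous Hegselmann-Krause update rule. -/
def isHK {n : ℕ} (r : Fin n → ℝ) (x : ℕ → Fin n → ℝ) : Prop :=
  ∀ t i, x (t + 1) i = (∑ j ∈ hkN r (x t) i, x t j) / ((hkN r (x t) i).card : ℝ)

lemma self_mem_hkN {n : ℕ} (r : Fin n → ℝ) (hr : ∀ i, 0 < r i) (y : Fin n → ℝ) (i : Fin n) :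
    i ∈ hkN r y i := by
  simp [hkN, (hr i).le]

lemma inf_mono {n : ℕ} (hn : 0 < n) (r : Fin n → ℝ) (x : ℕ → Fin n → ℝ)
    (hr : ∀ i, 0 < r i) (hHK : isHK r x) :
    Monotone fun t => ⨅ i, x t i := by
  have : NeZero n := ⟨hn.ne'⟩
  apply monotone_nat_of_le_succ
  intro t
  apply le_ciInf
  intro i
  rw [hHK t i]
  have hne : i ∈ hkN r (x t) i := self_mem_hkN r hr (x t) i
  have hpos : 0 < ((hkN r (x t) i).card : ℝ) := by
    have := Finset.card_pos.mpr ⟨i, hne⟩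
    exact_mod_cast this
  rw [le_div_iff₀ hpos]
  have : (hkN r (x t) i).card • (⨅ k, x t k) ≤ ∑ j ∈ hkN r (x t) i, x t j := by
    apply Finset.card_nsmul_le_sum
    intro j _
    exact ciInf_le (Finite.bddBelow_range _) j
  calc (⨅ i, x t i) * ((hkN r (x t) i).card : ℝ)
      = (hkN r (x t) i).card • (⨅ k, x t k) := by
        rw [nsmul_eq_mul]; ring
    _ ≤ _ := this

theorem stmt_7 (n : ℕ) (hn : 0 < n) (r : Fin n → ℝ) (x : ℕ → Fin n → ℝ)
    (hr : ∀ i, 0 < r i ∧ r i ≤ 1) (hx0 : ∀ i, x 0 i ∈ Set.Icc (0 : ℝ) 1)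
    (hHK : isHK r x) (c ε : ℝ) (T : ℕ)
    (hc : Tendsto (fun t => ⨅ i, x t i) atTop (𝓝 c))
    (hε : 0 < ε ∧ ε < (⨅ i, r i) / n ^ 2)
    (hT : c - ε < ⨅ i, x T i ∧ (⨅ i, x T i) ≤ c)
    (hcard : (Finset.univ.filter fun i =>
        c - ε < x T i ∧ x T i ≤ c + ((n : ℝ) - 1) * ε).card < n) :
    ∀ j : Fin n, ¬(c - ε < x T j ∧ x T j ≤ c + ((n : ℝ) - 1) * ε) →
      x T j > c + (⨅ i, r i) - ε := by
  have : NeZero n := ⟨hn.ne'⟩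
  intro j hj
  by_contra hcon
  push_neg at hcon
  -- every agent's value at T is ≥ inf > c - ε
  have hlow : ∀ k, c - ε < x T k := fun k =>
    lt_of_lt_of_le hT.1 (ciInf_le (Finite.bddBelow_range _) k)
  have hjhigh : c + ((n : ℝ) - 1) * ε < x T j := by
    by_contra h
    push_neg at h
    exact hj ⟨hlow j, h⟩
  -- inf at any time is ≤ c
  have hmono := inf_mono hn r x (fun i => (hr i).1) hHK
  have hle_c : ∀ t, (⨅ i, x t i) ≤ c := fun t => hmono.ge_of_tendsto hc t
  -- show every agent at time T+1 has value > c
  have hstep : ∀ k, c < x (T + 1) k := by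
    intro k
    -- find m in the neighborhood of k with x T m > c + (n-1)ε
    obtain ⟨m, hm_mem, hm_big⟩ :
        ∃ m ∈ hkN r (x T) k, c + ((n : ℝ) - 1) * ε < x T m := by
      by_cases hk : x T k ≤ c + ((n : ℝ) - 1) * ε
      · refine ⟨j, ?_, hjhigh⟩
        simp only [hkN, Finset.mem_filter, Finset.mem_univ, true_and]
        have h1 : x T j - x T k ≤ r k := by
          have hrk : (⨅ i, r i) ≤ r k := ciInf_le (Finite.bddBelow_range _) k
          have := hlow k
          linarith [hcon]
        have h2 : -(r k) ≤ x T j - x T k := by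
          have : x T k < x T j := lt_of_le_of_lt hk hjhigh
          linarith [(hr k).1]
        rw [abs_le]; exact ⟨h2, h1⟩
      · push_neg at hk
        exact ⟨k, self_mem_hkN r (fun i => (hr i).1) (x T) k, hk⟩
    rw [hHK T k]
    set S := hkN r (x T) k with hS
    have hcardpos : 0 < S.card := Finset.card_pos.mpr ⟨m, hm_mem⟩
    have hcardn : S.card ≤ n := by
      simpa using Finset.card_le_card (Finset.subset_univ S)
    have hsum : S.card * c < ∑ i ∈ S, x T i := by
      rw [← Finset.add_sum_erase S _ hm_mem]
      have herase : ((S.erase m).card : ℝ) * (c - ε) ≤ ∑ i ∈ S.erase m, x T i := by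
        have : (S.erase m).card • (c - ε) ≤ ∑ i ∈ S.erase m, x T i :=
          Finset.card_nsmul_le_sum _ _ _ (fun i _ => (hlow i).le)
        simpa [nsmul_eq_mul] using this
      have hec : ((S.erase m).card : ℝ) = (S.card : ℝ) - 1 := by
        rw [Finset.card_erase_of_mem hm_mem]
        have : 1 ≤ S.card := hcardpos
        push_cast [this]
        ring
      rw [hec] at herase
      have hcn : (S.card : ℝ) ≤ n := by exact_mod_cast hcardn
      have hc1 : (1 : ℝ) ≤ S.card := by exact_mod_cast hcardpos
      nlinarith [hε.1, hm_big, herase]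
    have hcardposR : 0 < (S.card : ℝ) := by exact_mod_cast hcardpos
    rw [lt_div_iff₀ hcardposR]
    linarith [hsum]
  -- contradiction with inf at T+1 ≤ c
  obtain ⟨k, hk⟩ := Finite.exists_min (x (T + 1))
  have : x (T + 1) k ≤ ⨅ i, x (T + 1) i := le_ciInf hk
  linarith [hle_c (T + 1), hstep k]
end

section
/- In the heterogeneous HK dynamics, let c = lim x_min(t), r = min_i r_i, ε ∈ (0, r/n²). Suppose at time t ≥ T every agent j with x_j(t) > c + (n−1)ε in fact satisfies x_j(t) > c + r − ε, and x_min(t) > c − ε. Then every such agent j satisfies x_j(t+1) > c + r/n − ε > c + (n−1)ε. -/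
open Finset Filter Topology

theorem stmt_8 (n : ℕ) (hn : 0 < n) (r : Fin n → ℝ) (x : ℕ → Fin n → ℝ)
    (hr : ∀ i, 0 < r i ∧ r i ≤ 1) (hx0 : ∀ i, x 0 i ∈ Set.Icc (0 : ℝ) 1)
    (hHK : isHK r x) (c ε : ℝ) (t : ℕ)
    (hc : Tendsto (fun s => ⨅ i, x s i) atTop (𝓝 c))
    (hε : 0 < ε ∧ ε < (⨅ i, r i) / n ^ 2)
    (hout : ∀ j : Fin n, x t j > c + ((n : ℝ) - 1) * ε → x t j > c + (⨅ i, r i) - ε)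
    (hmin : c - ε < ⨅ i, x t i) :
    ∀ j : Fin n, x t j > c + ((n : ℝ) - 1) * ε →
      x (t + 1) j > c + (⨅ i, r i) / n - ε ∧
        c + (⨅ i, r i) / n - ε > c + ((n : ℝ) - 1) * ε := by
  haveI : Nonempty (Fin n) := Fin.pos_iff_nonempty.mp hn
  set R := ⨅ i, r i with hR
  have hRpos : 0 < R := by
    obtain ⟨i, hi⟩ := Finite.exists_min r
    exact lt_of_lt_of_le (hr i).1 (le_ciInf hi)
  have hn1 : (1 : ℝ) ≤ n := by exact_mod_cast hn
  have hεpos := hε.1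
  have hε2 : ε < R / n ^ 2 := hε.2
  have hsecond : c + R / n - ε > c + ((n : ℝ) - 1) * ε := by
    have hn0 : (0 : ℝ) < n := by positivity
    rw [lt_div_iff₀ (by positivity)] at hε2
    have hdiv : R / n * n = R := div_mul_cancel₀ _ (ne_of_gt hn0)
    nlinarith [hdiv, hn0, sq_nonneg ((n:ℝ))]
  have hxlow : ∀ k, c - ε < x t k := fun k =>
    lt_of_lt_of_le hmin (ciInf_le (Set.Finite.bddBelow (Set.finite_range _)) k)
  intro j hj
  refine ⟨?_, hsecond⟩
  have hjbig : x t j > c + R - ε := hout j hj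
  set N := hkN r (x t) j with hN
  have hjN : j ∈ N := by
    simp [hN, hkN, abs_nonneg, le_of_lt (hr j).1]
  have hcard1 : 1 ≤ N.card := Finset.card_pos.mpr ⟨j, hjN⟩
  have hcardn : N.card ≤ n := by
    simpa using Finset.card_le_card (Finset.subset_univ N)
  set m : ℝ := (N.card : ℝ) with hm
  have hm1 : (1 : ℝ) ≤ m := by rw [hm]; exact_mod_cast hcard1
  have hm0 : (0 : ℝ) < m := lt_of_lt_of_le one_pos hm1
  have hmn : m ≤ (n : ℝ) := by rw [hm]; exact_mod_cast hcardn
  have hsum : ∑ k ∈ N, x t k > m * (c - ε) + R := by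
    have hsplit : ∑ k ∈ N.erase j, x t k + x t j = ∑ k ∈ N, x t k :=
      Finset.sum_erase_add N _ hjN
    have herase : (N.erase j).card • (c - ε) ≤ ∑ k ∈ N.erase j, x t k :=
      Finset.card_nsmul_le_sum _ _ _ (fun k _ => (hxlow k).le)
    have hcarde : ((N.erase j).card : ℝ) = m - 1 := by
      rw [Finset.card_erase_of_mem hjN, Nat.cast_sub hcard1]
      simp [hm]
    rw [nsmul_eq_mul, hcarde] at herase
    nlinarith
  have hx1 : x (t + 1) j = (∑ k ∈ N, x t k) / m := hHK t j
  rw [hx1]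
  have h3 : (m * (c - ε) + R) / m = c - ε + R / m := by
    field_simp
  have h4 : R / n ≤ R / m := by
    apply div_le_div_of_nonneg_left hRpos.le hm0 hmn
  have h5 : (m * (c - ε) + R) / m < (∑ k ∈ N, x t k) / m :=
    div_lt_div_of_pos_right hsum hm0
  linarith [h5, h3 ▸ h5]
end

section
/- In the heterogeneous HK dynamics, with c = lim x_min(t), r = min_i r_i, ε ∈ (0, r/n²), and V¹_ε(t) = {i : c − ε < x_i(t) ≤ c + (n−1)ε}: if at time t we have x_min(t) > c − ε, all agents outside V¹_ε(t) have opinion > c + r − ε, and some agent i ∈ V¹_ε(t) has a neighbor j ∉ V¹_ε(t), then x_i(t+1) > c + (n−1)ε, i.e., i ∉ V¹_ε(t+1). -/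
open Finset Filter Topology

theorem stmt_9 (n : ℕ) (hn : 0 < n) (r : Fin n → ℝ) (x : ℕ → Fin n → ℝ)
    (hr : ∀ i, 0 < r i ∧ r i ≤ 1) (hx0 : ∀ i, x 0 i ∈ Set.Icc (0 : ℝ) 1)
    (hHK : isHK r x) (c ε : ℝ) (t : ℕ)
    (hc : Tendsto (fun s => ⨅ i, x s i) atTop (𝓝 c))
    (hε : 0 < ε ∧ ε < (⨅ i, r i) / n ^ 2)
    (hmin : c - ε < ⨅ i, x t i)
    (hout : ∀ j : Fin n, ¬(c - ε < x t j ∧ x t j ≤ c + ((n : ℝ) - 1) * ε) →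
      x t j > c + (⨅ i, r i) - ε) :
    ∀ i : Fin n, (c - ε < x t i ∧ x t i ≤ c + ((n : ℝ) - 1) * ε) →
      (∃ j ∈ hkN r (x t) i, ¬(c - ε < x t j ∧ x t j ≤ c + ((n : ℝ) - 1) * ε)) →
      x (t + 1) i > c + ((n : ℝ) - 1) * ε := by
  intro i hi hj
  obtain ⟨j0, hj0S, hj0out⟩ := hj
  set R : ℝ := ⨅ i, r i with hR
  set S : Finset (Fin n) := hkN r (x t) i with hS
  have hiS : i ∈ S := by
    simp [hS, hkN, (hr i).1.le]
  have hcard_pos : 0 < S.card := Finset.card_pos.2 ⟨i, hiS⟩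
  have hcard_le : S.card ≤ n := by
    simpa using Finset.card_le_card (Finset.subset_univ S)
  have hlow : ∀ j : Fin n, c - ε < x t j := fun j =>
    lt_of_lt_of_le hmin (ciInf_le (Set.Finite.bddBelow (Set.finite_range _)) j)
  have hj0 : c + R - ε < x t j0 := hout j0 hj0out
  have hRpos : (n:ℝ)^2 * ε < R := by
    have h2 := hε.2
    have hnpos : (0:ℝ) < (n:ℝ)^2 := by positivity
    rw [lt_div_iff₀ hnpos] at h2
    linarith
  have hsum_erase : ((S.erase j0).card : ℝ) * (c - ε) ≤ ∑ j ∈ S.erase j0, x t j := by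
    have := Finset.card_nsmul_le_sum (S.erase j0) (fun j => x t j) (c - ε)
      (fun j _ => (hlow j).le)
    simpa [nsmul_eq_mul] using this
  have hcard_erase : (S.erase j0).card = S.card - 1 := Finset.card_erase_of_mem hj0S
  have hsum : ∑ j ∈ S, x t j > ((S.card : ℝ) - 1) * (c - ε) + (c + R - ε) := by
    rw [← Finset.sum_erase_add S _ hj0S]
    have hcast : ((S.erase j0).card : ℝ) = (S.card : ℝ) - 1 := by
      rw [hcard_erase]
      have : 1 ≤ S.card := hcard_pos
      push_cast [Nat.cast_sub this]
      ring
    rw [hcast] at hsum_erase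
    linarith
  have hupdate := hHK t i
  rw [hupdate]
  have hm1 : (1:ℝ) ≤ (S.card : ℝ) := by exact_mod_cast hcard_pos
  have hmn : (S.card : ℝ) ≤ (n:ℝ) := by exact_mod_cast hcard_le
  rw [gt_iff_lt, lt_div_iff₀ (by linarith : (0:ℝ) < (S.card : ℝ))]
  -- need (c + (n-1)ε) * card < sum; sum > card*(c-ε) + R ; R > n²ε ≥ card*n*ε
  have hn1 : (1:ℝ) ≤ (n:ℝ) := by exact_mod_cast hn
  nlinarith [hsum, hRpos, hε.1, mul_le_mul_of_nonneg_right hmn (le_of_lt hε.1),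
    mul_le_mul_of_nonneg_left hmn (by linarith : (0:ℝ) ≤ (n:ℝ)*ε)]
end

section
/- In the heterogeneous HK dynamics, there exist constants c ≤ c' in [0,1], nonempty sets of agents C and C', and a time t* ≥ 0 such that x_i(t) = c for all i ∈ C and x_j(t) = c' for all j ∈ C' and all t ≥ t*. -/
open Finset Filter Topology

lemma hkN_self_mem {n : ℕ} {r : Fin n → ℝ} (hr : ∀ i, 0 < r i) (y : Fin n → ℝ) (i : Fin n) :
    i ∈ hkN r y i := by
  simp only [hkN, Finset.mem_filter, Finset.mem_univ, true_and, sub_self, abs_zero]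
  exact (hr i).le

lemma hkN_card_pos {n : ℕ} {r : Fin n → ℝ} (hr : ∀ i, 0 < r i) (y : Fin n → ℝ) (i : Fin n) :
    0 < (hkN r y i).card :=
  Finset.card_pos.mpr ⟨i, hkN_self_mem hr y i⟩

lemma hkN_card_le {n : ℕ} (r : Fin n → ℝ) (y : Fin n → ℝ) (i : Fin n) :
    (hkN r y i).card ≤ n := by
  simpa using Finset.card_le_univ (hkN r y i)

/-- Averaging formula relative to a base value `b`. -/
lemma hk_avg {n : ℕ} {r : Fin n → ℝ} {x : ℕ → Fin n → ℝ} (hHK : isHK r x)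
    (hr : ∀ i, 0 < r i) (t : ℕ) (i : Fin n) (b : ℝ) :
    x (t+1) i = b + (∑ j ∈ hkN r (x t) i, (x t j - b)) / ((hkN r (x t) i).card : ℝ) := by
  have hc : ((hkN r (x t) i).card : ℝ) ≠ 0 := by
    exact_mod_cast (hkN_card_pos hr (x t) i).ne'
  rw [hHK t i, Finset.sum_sub_distrib, Finset.sum_const, nsmul_eq_mul]
  field_simp
  ring

theorem stmt_10 (n : ℕ) (hn : 0 < n) (r : Fin n → ℝ) (x : ℕ → Fin n → ℝ)
    (hr : ∀ i, 0 < r i ∧ r i ≤ 1) (hx0 : ∀ i, x 0 i ∈ Set.Icc (0 : ℝ) 1)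
    (hHK : isHK r x) :
    ∃ c c' : ℝ, c ≤ c' ∧ c ∈ Set.Icc (0 : ℝ) 1 ∧ c' ∈ Set.Icc (0 : ℝ) 1 ∧
      ∃ C C' : Finset (Fin n), C.Nonempty ∧ C'.Nonempty ∧
        ∃ tstar : ℕ, ∀ t, tstar ≤ t →
          (∀ i ∈ C, x t i = c) ∧ (∀ j ∈ C', x t j = c') := by
  haveI : Nonempty (Fin n) := ⟨⟨0, hn⟩⟩
  have hr0 : ∀ i, 0 < r i := fun i => (hr i).1
  have hn1 : (1:ℝ) ≤ (n:ℝ) := by exact_mod_cast hn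
  have hnpos : (0:ℝ) < (n:ℝ) := by linarith
  -- opinions remain in [0,1]
  have hbd : ∀ t i, x t i ∈ Set.Icc (0:ℝ) 1 := by
    intro t
    induction t with
    | zero => exact hx0
    | succ t ih =>
      intro i
      have hcard : (0:ℝ) < ((hkN r (x t) i).card : ℝ) := by
        exact_mod_cast hkN_card_pos hr0 (x t) i
      constructor
      · rw [hHK t i]
        exact div_nonneg (Finset.sum_nonneg fun j _ => (ih j).1) hcard.le
      · rw [hHK t i, div_le_one hcard]
        calc ∑ j ∈ hkN r (x t) i, x t j ≤ ∑ _j ∈ hkN r (x t) i, (1:ℝ) :=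
              Finset.sum_le_sum fun j _ => (ih j).2
          _ = ((hkN r (x t) i).card : ℝ) := by simp
  -- minimum opinion
  set m : ℕ → ℝ := fun t => ⨅ i, x t i with hm_def
  have hmle : ∀ t i, m t ≤ x t i := fun t i =>
    ciInf_le (Set.Finite.bddBelow (Set.finite_range _)) i
  have hargmin : ∀ t, ∃ i, x t i = m t := by
    intro t
    obtain ⟨i, hi⟩ := Finite.exists_min (x t)
    exact ⟨i, le_antisymm (le_ciInf hi) (hmle t i)⟩
  -- key lower bound: one neighbor above b + d pushes the update above b + d/n
  have key : ∀ t i (b : ℝ), (∀ j, b ≤ x t j) → ∀ h ∈ hkN r (x t) i,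
      b + (x t h - b) / n ≤ x (t+1) i := by
    intro t i b hb h hh
    have hcard : (0:ℝ) < ((hkN r (x t) i).card : ℝ) := by
      exact_mod_cast hkN_card_pos hr0 (x t) i
    have hcardn : ((hkN r (x t) i).card : ℝ) ≤ n := by
      exact_mod_cast hkN_card_le r (x t) i
    have hsum : x t h - b ≤ ∑ j ∈ hkN r (x t) i, (x t j - b) :=
      Finset.single_le_sum (fun j _ => sub_nonneg.mpr (hb j)) hh
    rw [hk_avg hHK hr0 t i b]
    have h1 : (x t h - b) / n ≤ (x t h - b) / ((hkN r (x t) i).card : ℝ) :=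
      div_le_div_of_nonneg_left (sub_nonneg.mpr (hb h)) hcard hcardn
    have h2 : (x t h - b) / ((hkN r (x t) i).card : ℝ)
        ≤ (∑ j ∈ hkN r (x t) i, (x t j - b)) / ((hkN r (x t) i).card : ℝ) :=
      div_le_div_of_nonneg_right hsum hcard.le
    linarith
  -- monotone lower bound
  have hlow : ∀ t i, m t ≤ x (t+1) i := by
    intro t i
    have := key t i (m t) (hmle t) i (hkN_self_mem hr0 (x t) i)
    have h0 : (0:ℝ) ≤ (x t i - m t)/n := div_nonneg (sub_nonneg.mpr (hmle t i)) hnpos.le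
    linarith
  have hmono : Monotone m := monotone_nat_of_le_succ fun t => le_ciInf (hlow t)
  -- neighbors of a nearly-minimal updated agent are close to the minimum
  have key2 : ∀ t i (δ : ℝ), 0 ≤ δ → x (t+1) i ≤ m t + δ →
      ∀ j ∈ hkN r (x t) i, x t j ≤ m t + n * δ := by
    intro t i δ hδ hup j hj
    have hcard : (0:ℝ) < ((hkN r (x t) i).card : ℝ) := by
      exact_mod_cast hkN_card_pos hr0 (x t) i
    have hcardn : ((hkN r (x t) i).card : ℝ) ≤ n := by
      exact_mod_cast hkN_card_le r (x t) i
    have hsum : x t j - m t ≤ ∑ k ∈ hkN r (x t) i, (x t k - m t) :=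
      Finset.single_le_sum (fun k _ => sub_nonneg.mpr (hmle t k)) hj
    have havg := hk_avg hHK hr0 t i (m t)
    have hS : (∑ k ∈ hkN r (x t) i, (x t k - m t))
        = ((hkN r (x t) i).card : ℝ) * (x (t+1) i - m t) := by
      rw [havg]; field_simp; ring
    have : (∑ k ∈ hkN r (x t) i, (x t k - m t)) ≤ ((hkN r (x t) i).card : ℝ) * δ := by
      rw [hS]
      exact mul_le_mul_of_nonneg_left (by linarith) hcard.le
    nlinarith
  -- minimal confidence bound
  obtain ⟨i0, hi0⟩ := Finite.exists_min r
  set ρ : ℝ := r i0 with hρ_def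
  have hρpos : 0 < ρ := hr0 i0
  have hρle : ∀ i, ρ ≤ r i := hi0
  -- the small parameter
  set ε : ℝ := ρ / (2 * n * (n+1)) with hε_def
  have hεpos : 0 < ε := by
    apply div_pos hρpos; positivity
  have hA : (n:ℝ) * ε < ρ := by
    have h : (n:ℝ) * ε = ρ * (n:ℝ) / (2 * (n:ℝ) * ((n:ℝ)+1)) := by
      rw [hε_def]; ring
    rw [h, div_lt_iff₀ (by positivity)]
    nlinarith [mul_pos hρpos hnpos, mul_pos (mul_pos hρpos hnpos) hnpos]
  have hB : ε + (n:ℝ) * ε < ρ / n := by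
    have h : ε + (n:ℝ) * ε = ρ / (2 * (n:ℝ)) := by
      rw [hε_def]; field_simp; ring
    rw [h]
    exact div_lt_div_of_pos_left hρpos hnpos (by linarith)
  -- the supremum of the minimum
  have hbddm : BddAbove (Set.range m) := by
    refine ⟨1, ?_⟩
    rintro y ⟨t, rfl⟩
    exact (hmle t ⟨0, hn⟩).trans (hbd t ⟨0, hn⟩).2
  set c₁ : ℝ := ⨆ t, m t with hc₁
  have hmlec : ∀ t, m t ≤ c₁ := fun t => le_ciSup hbddm t
  obtain ⟨T, hT⟩ : ∃ T, c₁ - ε < m T := by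
    have h : c₁ - ε < ⨆ t, m t := by rw [← hc₁]; linarith
    exact exists_lt_of_lt_ciSup h
  have hstep : ∀ t, T ≤ t → m (t+1) ≤ m t + ε := by
    intro t ht
    have h1 := hmono ht
    have := hmlec (t+1)
    linarith
  -- the gap
  have hgap : ∀ t, T ≤ t → ∀ j, x t j ≤ m t + n * ε ∨ m t + ρ < x t j := by
    intro t ht j
    obtain ⟨is, his⟩ := hargmin (t+1)
    have h1 : ∀ k ∈ hkN r (x t) is, x t k ≤ m t + n * ε :=
      key2 t is ε hεpos.le (by rw [his]; exact hstep t ht)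
    by_cases hj : j ∈ hkN r (x t) is
    · exact Or.inl (h1 j hj)
    · right
      have hself := h1 is (hkN_self_mem hr0 (x t) is)
      have habs : r is < |x t j - x t is| := by
        by_contra h
        push_neg at h
        exact hj (by simpa [hkN] using h)
      have hrρ : ρ ≤ r is := hρle is
      have hjm : m t ≤ x t j := hmle t j
      have hlowb : -(r is) < x t j - x t is := by
        have : (n:ℝ) * ε < r is := lt_of_lt_of_le hA hrρ
        linarith
      have hhi : r is < x t j - x t is := by
        by_contra h
        push_neg at h
        have := abs_le.mpr ⟨hlowb.le, h⟩
        linarith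
      have him : m t ≤ x t is := hmle t is
      linarith
  -- the low cluster
  set L : ℕ → Finset (Fin n) := fun t => Finset.univ.filter (fun j => x t j ≤ m t + n * ε)
    with hL_def
  have hmemL : ∀ t j, j ∈ L t ↔ x t j ≤ m t + n * ε := by
    intro t j; simp [hL_def]
  have hLne : ∀ t, (L t).Nonempty := by
    intro t
    obtain ⟨i, hi⟩ := hargmin t
    exact ⟨i, (hmemL t i).mpr (by nlinarith [hεpos, hnpos])⟩
  have hLmono : ∀ t, T ≤ t → L (t+1) ⊆ L t := by
    intro t ht j hj
    rw [hmemL] at hj ⊢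
    by_contra hnot
    push_neg at hnot
    have hρbig : m t + ρ < x t j := (hgap t ht j).resolve_left (not_le.mpr hnot)
    have hpush := key t j (m t) (hmle t) j (hkN_self_mem hr0 (x t) j)
    have hdiv : ρ / (n:ℝ) ≤ (x t j - m t)/(n:ℝ) :=
      div_le_div_of_nonneg_right (by linarith) hnpos.le
    have := hstep t ht
    linarith
  have hLchain : ∀ s t, T ≤ s → s ≤ t → L t ⊆ L s := by
    intro s t hs hst
    induction hst with
    | refl => exact Finset.Subset.refl _
    | @step t' ht' ih => exact (hLmono t' (hs.trans ht')).trans ih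
  -- stabilization of L
  set S : Set ℕ := {k : ℕ | ∃ t, T ≤ t ∧ (L t).card = k} with hS_def
  have hSne : S.Nonempty := ⟨(L T).card, T, le_rfl, rfl⟩
  obtain ⟨T', hT'T, hT'card⟩ : ∃ t, T ≤ t ∧ (L t).card = sInf S := Nat.sInf_mem hSne
  have hLeq : ∀ t, T' ≤ t → L t = L T' := by
    intro t ht
    have hsub := hLchain T' t hT'T ht
    have hcard : (L T').card ≤ (L t).card := by
      rw [hT'card]
      exact Nat.sInf_le ⟨t, hT'T.trans ht, rfl⟩
    exact Finset.eq_of_subset_of_card_le hsub hcard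
  -- neighbor sets of cluster members equal the cluster
  have hNL : ∀ t, T' ≤ t → ∀ j ∈ L T', hkN r (x t) j = L T' := by
    intro t ht j hj
    apply Finset.ext
    intro k
    constructor
    · intro hk
      rw [← hLeq t ht, hmemL]
      by_contra hnot
      push_neg at hnot
      have hρbig : m t + ρ < x t k := (hgap t (hT'T.trans ht) k).resolve_left (not_le.mpr hnot)
      have hpush := key t j (m t) (hmle t) k hk
      have hdiv : ρ / (n:ℝ) ≤ (x t k - m t)/(n:ℝ) :=
        div_le_div_of_nonneg_right (by linarith) hnpos.le
      have hst := hstep t (hT'T.trans ht)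
      have hjnext : j ∈ L (t+1) := by
        rw [hLeq (t+1) (ht.trans (Nat.le_succ t))]; exact hj
      rw [hmemL] at hjnext
      linarith
    · intro hk
      rw [← hLeq t ht] at hk hj
      rw [hmemL] at hk hj
      have h1 : m t ≤ x t k := hmle t k
      have h2 : m t ≤ x t j := hmle t j
      have hrj : ρ ≤ r j := hρle j
      simp only [hkN, Finset.mem_filter, Finset.mem_univ, true_and]
      rw [abs_le]
      constructor <;> linarith
  -- the cluster collapses to a constant
  obtain ⟨j₀, hj₀⟩ := hLne T'
  set c : ℝ := x (T'+1) j₀ with hc_def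
  have havg' : ∀ t, T' ≤ t → ∀ j ∈ L T',
      x (t+1) j = (∑ k ∈ L T', x t k) / ((L T').card : ℝ) := by
    intro t ht j hj
    rw [hHK t j, hNL t ht j hj]
  have hconst : ∀ t, T' + 1 ≤ t → ∀ j ∈ L T', x t j = c := by
    intro t ht
    induction t, ht using Nat.le_induction with
    | base =>
      intro j hj
      rw [havg' T' le_rfl j hj, hc_def, havg' T' le_rfl j₀ hj₀]
    | succ t ht ih =>
      intro j hj
      rw [havg' t (le_trans (Nat.le_succ T') ht) j hj]
      have hcardpos : 0 < (L T').card := Finset.card_pos.mpr ⟨j₀, hj₀⟩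
      have : ∑ k ∈ L T', x t k = ((L T').card : ℝ) * c := by
        rw [Finset.sum_congr rfl (fun k hk => ih k hk)]
        simp [mul_comm]
      rw [this]
      field_simp
  refine ⟨c, c, le_rfl, hbd (T'+1) j₀, hbd (T'+1) j₀, L T', L T', ⟨j₀, hj₀⟩, ⟨j₀, hj₀⟩,
    T'+1, fun t ht => ⟨hconst t ht, hconst t ht⟩⟩
end

section
/- In the heterogeneous HK dynamics with r = min_i r_i, letting c = lim x_min(t) and c' = lim x_max(t): if c' − c ≤ 2r, then the whole system converges in finite time, i.e., there is a time t* and values x_i* such that x_i(t) = x_i* for all t ≥ t* and all i. -/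
open Finset Filter Topology

namespace HKaux

variable {ι : Type*}

lemma le_avg {s : Finset ι} (hs : s.Nonempty) {y : ι → ℝ} {a : ℝ}
    (h : ∀ j ∈ s, a ≤ y j) : a ≤ (∑ j ∈ s, y j) / (s.card : ℝ) := by
  have hc : 0 < (s.card : ℝ) := by exact_mod_cast Finset.card_pos.mpr hs
  rw [le_div_iff₀ hc]
  have h1 : s.card • a ≤ ∑ j ∈ s, y j := Finset.card_nsmul_le_sum s y a h
  rw [nsmul_eq_mul] at h1
  nlinarith

lemma avg_le {s : Finset ι} (hs : s.Nonempty) {y : ι → ℝ} {a : ℝ}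
    (h : ∀ j ∈ s, y j ≤ a) : (∑ j ∈ s, y j) / (s.card : ℝ) ≤ a := by
  have hc : 0 < (s.card : ℝ) := by exact_mod_cast Finset.card_pos.mpr hs
  rw [div_le_iff₀ hc]
  have h1 : ∑ j ∈ s, y j ≤ s.card • a := Finset.sum_le_card_nsmul s y a h
  rw [nsmul_eq_mul] at h1
  nlinarith

lemma avg_eq {s : Finset ι} (hs : s.Nonempty) {y : ι → ℝ} {a : ℝ}
    (h : ∀ j ∈ s, y j = a) : (∑ j ∈ s, y j) / (s.card : ℝ) = a := by
  have hc : (s.card : ℝ) ≠ 0 := by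
    have := Finset.card_pos.mpr hs; positivity
  rw [Finset.sum_congr rfl h, Finset.sum_const, nsmul_eq_mul,
    mul_div_cancel_left₀ a hc]

lemma le_avg_strong [DecidableEq ι] {s : Finset ι} {y : ι → ℝ} {a d : ℝ} {n : ℕ}
    (hd : 0 ≤ d) (hcard : s.card ≤ n) (h : ∀ j ∈ s, a ≤ y j) {j₀ : ι}
    (hj₀ : j₀ ∈ s) (h₀ : a + d ≤ y j₀) :
    a + d / (n : ℝ) ≤ (∑ j ∈ s, y j) / (s.card : ℝ) := by
  have hcp : 0 < s.card := Finset.card_pos.mpr ⟨j₀, hj₀⟩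
  have hc : 0 < (s.card : ℝ) := by exact_mod_cast hcp
  have hn : 0 < (n : ℝ) := by
    have : 0 < n := lt_of_lt_of_le hcp hcard
    exact_mod_cast this
  have hsum : (s.card : ℝ) * a + d ≤ ∑ j ∈ s, y j := by
    have h1 : y j₀ + ∑ j ∈ s.erase j₀, y j = ∑ j ∈ s, y j :=
      Finset.add_sum_erase s y hj₀
    have h2 : (s.erase j₀).card • a ≤ ∑ j ∈ s.erase j₀, y j :=
      Finset.card_nsmul_le_sum _ _ _ (fun i hi => h i (Finset.mem_of_mem_erase hi))
    rw [nsmul_eq_mul, Finset.card_erase_of_mem hj₀, Nat.cast_sub hcp, Nat.cast_one] at h2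
    linarith
  have step1 : a + d / (s.card : ℝ) ≤ (∑ j ∈ s, y j) / (s.card : ℝ) := by
    rw [le_div_iff₀ hc]
    have : (a + d / (s.card : ℝ)) * (s.card : ℝ) = (s.card : ℝ) * a + d := by
      field_simp
    rw [this]; exact hsum
  have step2 : d / (n : ℝ) ≤ d / (s.card : ℝ) := by
    exact div_le_div_of_nonneg_left hd hc (by exact_mod_cast hcard)
  linarith


lemma avg_le_strong [DecidableEq ι] {s : Finset ι} {y : ι → ℝ} {a d : ℝ} {n : ℕ}
    (hd : 0 ≤ d) (hcard : s.card ≤ n) (h : ∀ j ∈ s, y j ≤ a) {j₀ : ι}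
    (hj₀ : j₀ ∈ s) (h₀ : y j₀ ≤ a - d) :
    (∑ j ∈ s, y j) / (s.card : ℝ) ≤ a - d / (n : ℝ) := by
  have key := le_avg_strong (y := fun j => -(y j)) (a := -a) (d := d) hd hcard
    (fun j hj => neg_le_neg (h j hj)) hj₀ (by show -a + d ≤ -(y j₀); linarith)
  rw [Finset.sum_neg_distrib, neg_div] at key
  linarith

lemma avg_forced_eq {s : Finset ι} {y : ι → ℝ} {a : ℝ}
    (h : ∀ j ∈ s, a ≤ y j) (hle : (∑ j ∈ s, y j) / (s.card : ℝ) ≤ a) :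
    ∀ j₀ ∈ s, y j₀ = a := by
  classical
  intro j₀ hj₀
  by_contra hne
  have hd : 0 < y j₀ - a := lt_of_le_of_ne (by linarith [h j₀ hj₀]) (by
    intro hh; exact hne (by linarith))
  have key := le_avg_strong (n := s.card) (d := y j₀ - a) hd.le le_rfl h hj₀ (by linarith)
  have hcp : 0 < (s.card : ℝ) := by
    exact_mod_cast Finset.card_pos.mpr ⟨j₀, hj₀⟩
  have hpos : 0 < (y j₀ - a) / (s.card : ℝ) := div_pos hd hcp
  linarith

section HK

variable {n : ℕ} {r : Fin n → ℝ} {x : ℕ → Fin n → ℝ}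

lemma mem_hkN_self (hr : ∀ i, 0 < r i) (y : Fin n → ℝ) (i : Fin n) :
    i ∈ hkN r y i := by
  simp [hkN, abs_le, le_of_lt (hr i)]

lemma hkN_card_le (y : Fin n → ℝ) (i : Fin n) : (hkN r y i).card ≤ n := by
  simpa using Finset.card_le_univ (hkN r y i)

lemma step_ge (hr : ∀ i, 0 < r i) (hHK : isHK r x) {t : ℕ} {a : ℝ}
    (h : ∀ j, a ≤ x t j) (i : Fin n) : a ≤ x (t + 1) i := by
  rw [hHK t i]
  exact le_avg ⟨i, mem_hkN_self hr _ i⟩ (fun j _ => h j)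

lemma step_le (hr : ∀ i, 0 < r i) (hHK : isHK r x) {t : ℕ} {a : ℝ}
    (h : ∀ j, x t j ≤ a) (i : Fin n) : x (t + 1) i ≤ a := by
  rw [hHK t i]
  exact avg_le ⟨i, mem_hkN_self hr _ i⟩ (fun j _ => h j)

lemma step_ge_strong (hHK : isHK r x) {t : ℕ} {a d : ℝ} (hd : 0 ≤ d)
    (h : ∀ j, a ≤ x t j) {i j₀ : Fin n} (hj₀ : j₀ ∈ hkN r (x t) i)
    (h₀ : a + d ≤ x t j₀) : a + d / (n : ℝ) ≤ x (t + 1) i := by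
  rw [hHK t i]
  exact le_avg_strong hd (hkN_card_le _ _) (fun j _ => h j) hj₀ h₀

lemma step_le_strong (hHK : isHK r x) {t : ℕ} {a d : ℝ} (hd : 0 ≤ d)
    (h : ∀ j, x t j ≤ a) {i j₀ : Fin n} (hj₀ : j₀ ∈ hkN r (x t) i)
    (h₀ : x t j₀ ≤ a - d) : x (t + 1) i ≤ a - d / (n : ℝ) := by
  rw [hHK t i]
  exact avg_le_strong hd (hkN_card_le _ _) (fun j _ => h j) hj₀ h₀

lemma step_eq (hr : ∀ i, 0 < r i) (hHK : isHK r x) {t : ℕ} {a : ℝ} {i : Fin n}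
    (h : ∀ j ∈ hkN r (x t) i, x t j = a) : x (t + 1) i = a := by
  rw [hHK t i]
  exact avg_eq ⟨i, mem_hkN_self hr _ i⟩ h

lemma step_forced (hHK : isHK r x) {t : ℕ} {a : ℝ} {i : Fin n}
    (h : ∀ j, a ≤ x t j) (hle : x (t + 1) i ≤ a) :
    ∀ j ∈ hkN r (x t) i, x t j = a := by
  rw [hHK t i] at hle
  exact avg_forced_eq (fun j _ => h j) hle


lemma min_fix (hn : 0 < n) (hr : ∀ i, 0 < r i) (hHK : isHK r x)
    {ρ : ℝ} (hρ0 : 0 < ρ) (hρ : ∀ i, ρ ≤ r i)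
    {c : ℝ} (hc : Tendsto (fun t => ⨅ i, x t i) atTop (𝓝 c)) :
    ∃ T, ∀ t, T ≤ t → (⨅ i, x t i) = c ∧ ∀ j, x t j = c ∨ c + ρ < x t j := by
  haveI : Nonempty (Fin n) := Fin.pos_iff_nonempty.mp hn
  set m : ℕ → ℝ := fun t => ⨅ i, x t i with hm
  have hlb : ∀ t i, m t ≤ x t i := fun t i => ciInf_le (Finite.bddBelow_range _) i
  have hat : ∀ t, ∃ k, x t k = m t := fun t => exists_eq_ciInf_of_finite
  have hmono : Monotone m := by
    apply monotone_nat_of_le_succ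
    intro t
    obtain ⟨k, hk⟩ := hat (t + 1)
    rw [← hk]
    exact step_ge hr hHK (hlb t) k
  have hmc : ∀ t, m t ≤ c := fun t => hmono.ge_of_tendsto hc t
  have hN1 : (1 : ℝ) ≤ (n : ℝ) := by exact_mod_cast hn
  have hN0 : (0 : ℝ) < (n : ℝ) := by linarith
  -- main fixation
  have hfix : ∃ T, ∀ t, T ≤ t → m t = c := by
    by_cases hex : ∃ t₀, m t₀ = c
    · obtain ⟨t₀, h₀⟩ := hex
      exact ⟨t₀, fun t ht => le_antisymm (hmc t) (h₀ ▸ hmono ht)⟩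
    · exfalso
      have hlt : ∀ t, m t < c :=
        fun t => lt_of_le_of_ne (hmc t) (fun h => hex ⟨t, h⟩)
      set κ : ℝ := ρ / ((n : ℝ) + 1) ^ 3 with hκdef
      have h3pos : (0 : ℝ) < ((n : ℝ) + 1) ^ 3 := by positivity
      have hκ0 : 0 < κ := div_pos hρ0 h3pos
      have hκval : κ * ((n : ℝ) + 1) ^ 3 = ρ := div_mul_cancel₀ _ (ne_of_gt h3pos)
      have hexp : ((n : ℝ) + 1) ^ 3
          = (n:ℝ)^3 + 3*(n:ℝ)^2 + 3*(n:ℝ) + 1 := by ring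
      have hn3 : (0:ℝ) ≤ (n:ℝ)^3 := by positivity
      have hn2 : (0:ℝ) ≤ (n:ℝ)^2 := by positivity
      have hn21 : (n:ℝ) ≤ (n:ℝ)^2 := by nlinarith [hN1]
      have hn32 : (n:ℝ)^2 ≤ (n:ℝ)^3 := by nlinarith [hN1, hn2]
      have hcube1 : (n : ℝ) ≤ ((n : ℝ) + 1) ^ 3 := by rw [hexp]; linarith
      have hcube2 : 2 * (n : ℝ) ≤ ((n : ℝ) + 1) ^ 3 := by rw [hexp]; linarith
      have hcube3 : 2 * (n : ℝ) ^ 2 ≤ ((n : ℝ) + 1) ^ 3 := by rw [hexp]; linarith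
      have hd2 : (n : ℝ) * κ ≤ ρ := by
        have := mul_le_mul_of_nonneg_left hcube1 hκ0.le
        linarith
      have hd1 : κ ≤ ρ / (n : ℝ) := by
        rw [le_div_iff₀ hN0]
        have := mul_le_mul_of_nonneg_left hcube1 hκ0.le
        linarith
      have hd3 : κ + ρ / (2 * (n : ℝ)) ≤ ρ / (n : ℝ) := by
        have h1 : ρ / (n : ℝ) - ρ / (2 * (n : ℝ)) = ρ / (2 * (n : ℝ)) := by
          field_simp; ring
        have h2 : κ ≤ ρ / (2 * (n : ℝ)) := by
          rw [le_div_iff₀ (by linarith : (0:ℝ) < 2 * (n:ℝ))]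
          have := mul_le_mul_of_nonneg_left hcube2 hκ0.le
          linarith
        linarith
      have hd4 : κ ≤ ρ / (2 * (n : ℝ)) / (n : ℝ) := by
        rw [le_div_iff₀ hN0, le_div_iff₀ (by linarith : (0:ℝ) < 2 * (n:ℝ))]
        have := mul_le_mul_of_nonneg_left hcube3 hκ0.le
        nlinarith
      obtain ⟨T₀, hT₀⟩ : ∃ T₀, ∀ t, T₀ ≤ t → c - κ < m t := by
        have := hc.eventually (eventually_gt_nhds (sub_lt_self c hκ0))
        exact eventually_atTop.mp this
      have hclose : ∀ t, T₀ ≤ t → c < m t + κ := by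
        intro t ht; have := hT₀ t ht; linarith
      -- Claim 1 : gap above the bottom cluster
      have claim1 : ∀ t, T₀ ≤ t → ∀ j, x t j ≤ m t + (n : ℝ) * κ ∨ m t + ρ < x t j := by
        intro t ht j
        obtain ⟨k, hk⟩ := hat (t + 1)
        have hself : k ∈ hkN r (x t) k := mem_hkN_self hr _ k
        have hnb : ∀ l ∈ hkN r (x t) k, x t l ≤ m t + (n : ℝ) * κ := by
          intro l hl
          by_contra hcon
          push_neg at hcon
          have hstep := step_ge_strong hHK (by positivity) (hlb t) hl hcon.le
          have h1 : (n : ℝ) * κ / (n : ℝ) = κ := by field_simp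
          rw [h1] at hstep
          have h2 : x (t + 1) k ≤ c := hk ▸ hmc (t + 1)
          have h3 := hclose t ht
          linarith
        by_cases hj : x t j ≤ m t + (n : ℝ) * κ
        · exact Or.inl hj
        · right
          by_contra hles
          push_neg at hj hles
          have hjk : j ∈ hkN r (x t) k := by
            have hk1 : x t k ≤ m t + (n : ℝ) * κ := hnb k hself
            have hk2 : m t ≤ x t k := hlb t k
            have hj2 : m t ≤ x t j := hlb t j
            simp only [hkN, Finset.mem_filter, Finset.mem_univ, true_and]
            rw [abs_le]
            constructor
            · have := hρ k; linarith
            · have := hρ k; linarith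
          have := hnb j hjk
          linarith
      -- Claim 2 : exact bottom cluster at time t+1
      have claim2 : ∀ t, T₀ ≤ t → ∀ j,
          x (t + 1) j = m (t + 1) ∨ m t + ρ / (n : ℝ) ≤ x (t + 1) j := by
        intro t ht
        classical
        set L : Finset (Fin n) := Finset.univ.filter (fun j => x t j ≤ m t + (n : ℝ) * κ)
          with hLdef
        have hmemL : ∀ l, l ∈ L ↔ x t l ≤ m t + (n : ℝ) * κ := by
          intro l; simp [hLdef]
        set v : ℝ := (∑ j ∈ L, x t j) / (L.card : ℝ) with hvdef
        have key : ∀ j, x (t + 1) j = v ∨ m t + ρ / (n : ℝ) ≤ x (t + 1) j := by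
          intro j
          by_cases hj : x t j ≤ m t + (n : ℝ) * κ
          · by_cases hA : ∀ l ∈ hkN r (x t) j, x t l ≤ m t + (n : ℝ) * κ
            · left
              have hNL : hkN r (x t) j = L := by
                ext l
                rw [hmemL l]
                simp only [hkN, Finset.mem_filter, Finset.mem_univ, true_and]
                constructor
                · intro hl
                  exact hA l (by simp [hkN, hl])
                · intro hl
                  rw [abs_le]
                  have h1 : m t ≤ x t l := hlb t l
                  have h2 : m t ≤ x t j := hlb t j
                  have := hρ j
                  constructor <;> linarith
              rw [hHK t j, hNL]
            · right
              push_neg at hA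
              obtain ⟨l, hl, hlv⟩ := hA
              have hlρ : m t + ρ < x t l := (claim1 t ht l).resolve_left (not_le.mpr hlv)
              exact step_ge_strong hHK hρ0.le (hlb t) hl hlρ.le
          · right
            have hjρ : m t + ρ < x t j := (claim1 t ht j).resolve_left hj
            exact step_ge_strong hHK hρ0.le (hlb t) (mem_hkN_self hr _ j) hjρ.le
        have hmv : m (t + 1) = v := by
          obtain ⟨k₁, hk₁⟩ := hat (t + 1)
          rcases key k₁ with h | h
          · rw [← hk₁, h]
          · exfalso
            have h2 : x (t + 1) k₁ ≤ c := hk₁ ▸ hmc (t + 1)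
            have h3 := hclose t ht
            linarith
        intro j
        rcases key j with h | h
        · exact Or.inl (h.trans hmv.symm)
        · exact Or.inr h
      -- Claim 3 : the minimum stabilizes
      have claim3 : ∀ t, T₀ ≤ t → m (t + 2) = m (t + 1) := by
        intro t ht
        have D : ∀ j, x (t + 1) j = m (t + 1) ∨
            m (t + 1) + ρ / (2 * (n : ℝ)) ≤ x (t + 1) j := by
          intro j
          rcases claim2 t ht j with h | h
          · exact Or.inl h
          · right
            have h2 : m (t + 1) ≤ c := hmc (t + 1)
            have h3 := hclose t ht
            linarith
        have key : ∀ j, x (t + 2) j = m (t + 1) ∨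
            m (t + 1) + ρ / (2 * (n : ℝ)) / (n : ℝ) ≤ x (t + 2) j := by
          intro j
          by_cases hj : ∀ l ∈ hkN r (x (t + 1)) j, x (t + 1) l = m (t + 1)
          · exact Or.inl (step_eq hr hHK hj)
          · right
            push_neg at hj
            obtain ⟨l, hl, hlv⟩ := hj
            have hlρ : m (t + 1) + ρ / (2 * (n : ℝ)) ≤ x (t + 1) l :=
              (D l).resolve_left hlv
            exact step_ge_strong hHK (by positivity) (hlb (t + 1)) hl hlρ
        obtain ⟨k₂, hk₂⟩ := hat (t + 2)
        rcases key k₂ with h | h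
        · rw [← hk₂, h]
        · exfalso
          have h2 : x (t + 2) k₂ ≤ c := hk₂ ▸ hmc (t + 2)
          have h3 := hclose (t + 1) (by omega)
          linarith
      have claim3' : ∀ s, T₀ + 1 ≤ s → m (s + 1) = m s := by
        intro s hs
        obtain ⟨u, rfl⟩ : ∃ u, s = T₀ + 1 + u := ⟨s - (T₀ + 1), by omega⟩
        have := claim3 (T₀ + u) (by omega)
        have e1 : T₀ + u + 2 = T₀ + 1 + u + 1 := by omega
        have e2 : T₀ + u + 1 = T₀ + 1 + u := by omega
        rw [e1, e2] at this
        exact this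
      have hconst : ∀ s, T₀ + 1 ≤ s → m s = m (T₀ + 1) := by
        intro s hs
        induction s, hs using Nat.le_induction with
        | base => rfl
        | succ s hs ih => rw [claim3' s hs, ih]
      have htc : Tendsto m atTop (𝓝 (m (T₀ + 1))) := by
        apply tendsto_atTop_of_eventually_const (i₀ := T₀ + 1) hconst
      have hcu : c = m (T₀ + 1) := tendsto_nhds_unique hc htc
      exact absurd hcu (ne_of_gt (hlt (T₀ + 1)))
  -- derive the gap statement
  obtain ⟨T, hT⟩ := hfix
  refine ⟨T, fun t ht => ⟨hT t ht, ?_⟩⟩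
  obtain ⟨k, hk⟩ := hat (t + 1)
  have hall : ∀ j, c ≤ x t j := by
    intro j; have := hlb t j; rw [hT t ht] at this; exact this
  have hforced : ∀ l ∈ hkN r (x t) k, x t l = c := by
    apply step_forced hHK hall
    rw [hk, hT (t + 1) (by omega)]
  intro j
  by_cases hj : x t j ≤ c + ρ
  · left
    apply hforced
    have hkc : x t k = c := hforced k (mem_hkN_self hr _ k)
    simp only [hkN, Finset.mem_filter, Finset.mem_univ, true_and]
    rw [abs_le, hkc]
    have h1 := hall j
    have := hρ k
    constructor <;> linarith
  · right; linarith

end HK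

lemma hkN_neg {n : ℕ} (r y : Fin n → ℝ) (i : Fin n) :
    hkN r (fun j => -(y j)) i = hkN r y i := by
  ext l
  simp only [hkN, Finset.mem_filter, Finset.mem_univ, true_and]
  rw [show -y l - -y i = -(y l - y i) by ring, abs_neg]

lemma isHK_neg {n : ℕ} {r : Fin n → ℝ} {x : ℕ → Fin n → ℝ} (hHK : isHK r x) :
    isHK r (fun t i => -(x t i)) := by
  intro t i
  simp only
  rw [hkN_neg r (x t) i, hHK t i, Finset.sum_neg_distrib, neg_div]

lemma iInf_neg_fin {n : ℕ} (hn : 0 < n) (f : Fin n → ℝ) :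
    (⨅ i, -(f i)) = -(⨆ i, f i) := by
  haveI : Nonempty (Fin n) := Fin.pos_iff_nonempty.mp hn
  apply le_antisymm
  · obtain ⟨k, hk⟩ := exists_eq_ciSup_of_finite (f := f)
    calc (⨅ i, -(f i)) ≤ -(f k) := ciInf_le (Finite.bddBelow_range _) k
    _ = -(⨆ i, f i) := by rw [hk]
  · apply le_ciInf
    intro i
    exact neg_le_neg (le_ciSup (Finite.bddAbove_range _) i)

lemma max_fix {n : ℕ} {r : Fin n → ℝ} {x : ℕ → Fin n → ℝ}
    (hn : 0 < n) (hr : ∀ i, 0 < r i) (hHK : isHK r x)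
    {ρ : ℝ} (hρ0 : 0 < ρ) (hρ : ∀ i, ρ ≤ r i)
    {c' : ℝ} (hc' : Tendsto (fun t => ⨆ i, x t i) atTop (𝓝 c')) :
    ∃ T, ∀ t, T ≤ t → (⨆ i, x t i) = c' ∧ ∀ j, x t j = c' ∨ x t j < c' - ρ := by
  have hcneg : Tendsto (fun t => ⨅ i, -(x t i)) atTop (𝓝 (-c')) := by
    have := hc'.neg
    convert this using 2 with t
    exact iInf_neg_fin hn (x t)
  obtain ⟨T, hT⟩ := min_fix hn hr (isHK_neg hHK) hρ0 hρ hcneg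
  refine ⟨T, fun t ht => ?_⟩
  obtain ⟨h1, h2⟩ := hT t ht
  rw [iInf_neg_fin hn (x t)] at h1
  constructor
  · linarith [h1]
  · intro j
    rcases h2 j with h | h
    · left; linarith
    · right; linarith

theorem stmt_11' (n : ℕ) (hn : 0 < n) (r : Fin n → ℝ) (x : ℕ → Fin n → ℝ)
    (hr : ∀ i, 0 < r i ∧ r i ≤ 1)
    (hHK : isHK r x) (c c' : ℝ)
    (hc : Tendsto (fun t => ⨅ i, x t i) atTop (𝓝 c))
    (hc' : Tendsto (fun t => ⨆ i, x t i) atTop (𝓝 c'))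
    (hgap : c' - c ≤ 2 * ⨅ i, r i) :
    ∃ tstar : ℕ, ∃ xs : Fin n → ℝ, ∀ t, tstar ≤ t → ∀ i, x t i = xs i := by
  haveI : Nonempty (Fin n) := Fin.pos_iff_nonempty.mp hn
  have hr0 : ∀ i, 0 < r i := fun i => (hr i).1
  set ρ : ℝ := ⨅ i, r i with hρdef
  have hρ : ∀ i, ρ ≤ r i := fun i => ciInf_le (Finite.bddBelow_range _) i
  have hρ0 : 0 < ρ := by
    obtain ⟨k, hk⟩ := exists_eq_ciInf_of_finite (f := r)
    rw [hρdef, ← hk]; exact hr0 k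
  obtain ⟨T1, hT1⟩ := min_fix hn hr0 hHK hρ0 hρ hc
  obtain ⟨T2, hT2⟩ := max_fix hn hr0 hHK hρ0 hρ hc'
  set T := max T1 T2 with hTdef
  have hmin : ∀ t, T ≤ t → (⨅ i, x t i) = c := fun t ht => (hT1 t (le_trans (le_max_left _ _) ht)).1
  have hmax : ∀ t, T ≤ t → (⨆ i, x t i) = c' := fun t ht => (hT2 t (le_trans (le_max_right _ _) ht)).1
  have hvals : ∀ t, T ≤ t → ∀ j, x t j = c ∨ x t j = c' := by
    intro t ht j
    rcases (hT1 t (le_trans (le_max_left _ _) ht)).2 j with h | h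
    · exact Or.inl h
    · rcases (hT2 t (le_trans (le_max_right _ _) ht)).2 j with h' | h'
      · exact Or.inr h'
      · exfalso; linarith
  have hub : ∀ t, T ≤ t → ∀ j, x t j ≤ c' := by
    intro t ht j
    rw [← hmax t ht]
    exact le_ciSup (Finite.bddAbove_range _) j
  have hlb : ∀ t, T ≤ t → ∀ j, c ≤ x t j := by
    intro t ht j
    rw [← hmin t ht]
    exact ciInf_le (Finite.bddBelow_range _) j
  have hcc : c ≤ c' := le_trans (hlb T le_rfl (Classical.arbitrary _))
    (hub T le_rfl (Classical.arbitrary _))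
  have hN0 : (0 : ℝ) < (n : ℝ) := by exact_mod_cast hn
  have hstep : ∀ t, T ≤ t → ∀ i, x (t + 1) i = x t i := by
    intro t ht i
    rcases eq_or_lt_of_le hcc with hceq | hclt
    · rcases hvals t ht i with h | h <;> rcases hvals (t + 1) (by omega) i with h' | h' <;>
        rw [h, h'] <;> rw [hceq]
    · have hdpos : (0:ℝ) < (c' - c) / (n : ℝ) := div_pos (by linarith) hN0
      rcases hvals t ht i with h | h
      · have hup : x (t + 1) i ≤ c' - (c' - c) / (n : ℝ) := by
          apply step_le_strong hHK (by linarith) (hub t ht) (mem_hkN_self hr0 _ i)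
          rw [h]; ring_nf; exact le_rfl
        rcases hvals (t + 1) (by omega) i with h' | h'
        · rw [h, h']
        · exfalso; rw [h'] at hup; linarith
      · have hdown : c + (c' - c) / (n : ℝ) ≤ x (t + 1) i := by
          apply step_ge_strong hHK (by linarith) (hlb t ht) (mem_hkN_self hr0 _ i)
          rw [h]; ring_nf; exact le_rfl
        rcases hvals (t + 1) (by omega) i with h' | h'
        · exfalso; rw [h'] at hdown; linarith
        · rw [h, h']
  refine ⟨T, x T, fun t ht i => ?_⟩
  induction t, ht using Nat.le_induction with
  | base => rfl
  | succ s hs ih => rw [hstep s hs i, ih]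

end HKaux

theorem stmt_11 (n : ℕ) (hn : 0 < n) (r : Fin n → ℝ) (x : ℕ → Fin n → ℝ)
    (hr : ∀ i, 0 < r i ∧ r i ≤ 1) (hx0 : ∀ i, x 0 i ∈ Set.Icc (0 : ℝ) 1)
    (hHK : isHK r x) (c c' : ℝ)
    (hc : Tendsto (fun t => ⨅ i, x t i) atTop (𝓝 c))
    (hc' : Tendsto (fun t => ⨆ i, x t i) atTop (𝓝 c'))
    (hgap : c' - c ≤ 2 * ⨅ i, r i) :
    ∃ tstar : ℕ, ∃ xs : Fin n → ℝ, ∀ t, tstar ≤ t → ∀ i, x t i = xs i := by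
  exact HKaux.stmt_11' n hn r x hr hHK c c' hc hc' hgap
end

section
/- In the heterogeneous HK dynamics, if every confidence bound satisfies r_i ≥ 1/2, then for any initial opinions in [0,1] the system converges in finite time. -/
/-!
Split the opinions at `1 / 2`. Since `r i ≥ 1 / 2` and opinions lie in `[0, 1]`, each side is a
clique, and an agent hears a top segment of the low side and a bottom segment of the high side.
Hence every new opinion lies between the mean of the low side and the mean of the high side; the
first is nondecreasing and the second nonincreasing in time.

If the run never stops, the opinions always spread more than `1 / 2` (otherwise everybody hears
everybody and the next profile is constant), and at least every other step some agent hears both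
sides (otherwise everybody jumps to the mean of its side, twice). Once the two means have almost
converged, every opinion is close to the mean of its side, so an agent hearing both sides lands
strictly between the two clusters, which is impossible.
-/

open Finset Filter Topology

open scoped BigOperators

namespace Finset

variable {ι : Type*} {s : Finset ι} {f : ι → ℝ} {c : ℝ}

lemma expect_le_of_sum_sub_nonpos (hs : s.Nonempty) (h : ∑ i ∈ s, (f i - c) ≤ 0) :
    𝔼 i ∈ s, f i ≤ c := by
  have hcard : (0 : ℝ) < #s := by exact_mod_cast hs.card_pos
  rw [sum_sub_distrib, sum_const, nsmul_eq_mul] at h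
  rw [expect_eq_sum_div_card, div_le_iff₀ hcard]
  linarith

lemma le_expect_of_sum_sub_nonneg (hs : s.Nonempty) (h : 0 ≤ ∑ i ∈ s, (f i - c)) :
    c ≤ 𝔼 i ∈ s, f i := by
  have hcard : (0 : ℝ) < #s := by exact_mod_cast hs.card_pos
  rw [sum_sub_distrib, sum_const, nsmul_eq_mul] at h
  rw [expect_eq_sum_div_card, le_div_iff₀ hcard]
  linarith

lemma sum_sub_expect_eq_zero (s : Finset ι) (f : ι → ℝ) :
    ∑ i ∈ s, (f i - 𝔼 j ∈ s, f j) = 0 := by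
  rw [sum_sub_distrib, sum_const, ← card_smul_expect, sub_self]

lemma sum_filter_le_sub_expect_nonpos (s : Finset ι) (f : ι → ℝ) (θ : ℝ) :
    ∑ i ∈ s with f i ≤ θ, (f i - 𝔼 j ∈ s, f j) ≤ 0 := by
  set μ := 𝔼 j ∈ s, f j
  rcases le_or_gt θ μ with hθ | hθ
  · exact sum_nonpos fun i hi => by linarith [(mem_filter.1 hi).2]
  · have hsplit := sum_filter_add_sum_filter_not s (fun i => f i ≤ θ) (fun i => f i - μ)
    have hrest : 0 ≤ ∑ i ∈ s with ¬f i ≤ θ, (f i - μ) :=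
      sum_nonneg fun i hi => by linarith [not_le.1 (mem_filter.1 hi).2]
    linarith [sum_sub_expect_eq_zero s f]

lemma sum_filter_le_sub_expect_nonneg (s : Finset ι) (f : ι → ℝ) (θ : ℝ) :
    0 ≤ ∑ i ∈ s with θ ≤ f i, (f i - 𝔼 j ∈ s, f j) := by
  simpa [expect_neg_distrib, neg_add_eq_sub, sum_sub_distrib] using
    sum_filter_le_sub_expect_nonpos s (fun i => -f i) (-θ)

lemma sub_le_card_mul_expect_sub {i : ι} (hc : ∀ j ∈ s, c ≤ f j) (hi : i ∈ s) :
    f i - c ≤ #s * (𝔼 j ∈ s, f j - c) := by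
  have hsum : ∑ j ∈ s, (f j - c) = #s * (𝔼 j ∈ s, f j - c) := by
    rw [sum_sub_distrib, ← card_smul_expect, sum_const, nsmul_eq_mul, nsmul_eq_mul, mul_sub]
  rw [← hsum]
  exact single_le_sum (fun j hj => sub_nonneg.2 (hc j hj)) hi

lemma sub_le_card_mul_sub_expect {i : ι} (hc : ∀ j ∈ s, f j ≤ c) (hi : i ∈ s) :
    c - f i ≤ #s * (c - 𝔼 j ∈ s, f j) := by
  have h := sub_le_card_mul_expect_sub (f := fun j => -f j) (c := -c)
    (fun j hj => neg_le_neg (hc j hj)) hi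
  rw [expect_neg_distrib] at h
  linarith

end Finset

lemma Antitone.tendsto_sub_succ {u : ℕ → ℝ} (hu : Antitone u) (hb : BddBelow (Set.range u)) :
    Tendsto (fun t => u t - u (t + 1)) atTop (𝓝 0) := by
  have h := tendsto_atTop_ciInf hu hb
  simpa using h.sub (h.comp (tendsto_add_atTop_nat 1))

namespace HK

variable {n : ℕ} {r : Fin n → ℝ} {y : Fin n → ℝ} {i j : Fin n}

noncomputable def lowGroup (y : Fin n → ℝ) : Finset (Fin n) :=
  univ.filter fun i => y i ≤ 1 / 2

noncomputable def highGroup (y : Fin n → ℝ) : Finset (Fin n) :=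
  univ.filter fun i => 1 / 2 < y i

noncomputable def lowMean (y : Fin n → ℝ) : ℝ := 𝔼 i ∈ lowGroup y, y i

noncomputable def highMean (y : Fin n → ℝ) : ℝ := 𝔼 i ∈ highGroup y, y i

def IsLinked (r y : Fin n → ℝ) : Prop :=
  ∃ i, ∃ j ∈ hkN r y i, ∃ k ∈ hkN r y i, y j ≤ 1 / 2 ∧ 1 / 2 < y k

@[simp] lemma mem_lowGroup : i ∈ lowGroup y ↔ y i ≤ 1 / 2 := by simp [lowGroup]

@[simp] lemma mem_highGroup : i ∈ highGroup y ↔ 1 / 2 < y i := by simp [highGroup]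

lemma mem_hkN : j ∈ hkN r y i ↔ |y j - y i| ≤ r i := by simp [hkN]

lemma self_mem_hkN (hri : 0 ≤ r i) : i ∈ hkN r y i := by simpa [mem_hkN] using hri

lemma cast_card_le (s : Finset (Fin n)) : (#s : ℝ) ≤ n := by
  exact_mod_cast (card_le_univ s).trans_eq (Fintype.card_fin n)

lemma lowMean_le_half (h : (lowGroup y).Nonempty) : lowMean y ≤ 1 / 2 :=
  expect_le h fun _ hj => mem_lowGroup.1 hj

lemma half_lt_highMean (h : (highGroup y).Nonempty) : 1 / 2 < highMean y :=
  lt_expect (fun _ hj => (mem_highGroup.1 hj).le)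
    (h.imp fun _ hj => ⟨hj, mem_highGroup.1 hj⟩)

lemma mem_hkN_iff_of_le_half (hr : ∀ i, 1 / 2 ≤ r i) (hy : ∀ i, y i ∈ Set.Icc (0 : ℝ) 1)
    (hj : y j ≤ 1 / 2) : j ∈ hkN r y i ↔ y i - r i ≤ y j := by
  rw [mem_hkN, abs_le]
  constructor
  · rintro ⟨h, -⟩; linarith
  · intro h; constructor <;> linarith [(hy i).1, hr i]

lemma mem_hkN_iff_of_half_lt (hr : ∀ i, 1 / 2 ≤ r i) (hy : ∀ i, y i ∈ Set.Icc (0 : ℝ) 1)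
    (hj : 1 / 2 < y j) : j ∈ hkN r y i ↔ y j ≤ y i + r i := by
  rw [mem_hkN, abs_le]
  constructor
  · rintro ⟨-, h⟩; linarith
  · intro h; constructor <;> linarith [(hy i).2, hr i]

lemma lowMean_le_expect_hkN (hr : ∀ i, 1 / 2 ≤ r i) (hy : ∀ i, y i ∈ Set.Icc (0 : ℝ) 1)
    (hlow : (lowGroup y).Nonempty) (i : Fin n) : lowMean y ≤ 𝔼 j ∈ hkN r y i, y j := by
  refine le_expect_of_sum_sub_nonneg ⟨i, self_mem_hkN (by linarith [hr i])⟩ ?_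
  have hseen : {j ∈ hkN r y i | y j ≤ 1 / 2} = {j ∈ lowGroup y | y i - r i ≤ y j} := by
    ext j
    simp only [mem_filter, mem_lowGroup]
    constructor
    · rintro ⟨hN, hj⟩; exact ⟨hj, (mem_hkN_iff_of_le_half hr hy hj).1 hN⟩
    · rintro ⟨hj, h⟩; exact ⟨(mem_hkN_iff_of_le_half hr hy hj).2 h, hj⟩
  rw [← sum_filter_add_sum_filter_not _ fun j => y j ≤ 1 / 2, hseen]
  refine add_nonneg (sum_filter_le_sub_expect_nonneg _ _ _) (sum_nonneg fun j hj => ?_)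
  linarith [not_le.1 (mem_filter.1 hj).2, lowMean_le_half hlow]

lemma expect_hkN_le_highMean (hr : ∀ i, 1 / 2 ≤ r i) (hy : ∀ i, y i ∈ Set.Icc (0 : ℝ) 1)
    (hhigh : (highGroup y).Nonempty) (i : Fin n) : 𝔼 j ∈ hkN r y i, y j ≤ highMean y := by
  refine expect_le_of_sum_sub_nonpos ⟨i, self_mem_hkN (by linarith [hr i])⟩ ?_
  have hseen : {j ∈ hkN r y i | 1 / 2 < y j} = {j ∈ highGroup y | y j ≤ y i + r i} := by
    ext j
    simp only [mem_filter, mem_highGroup]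
    constructor
    · rintro ⟨hN, hj⟩; exact ⟨hj, (mem_hkN_iff_of_half_lt hr hy hj).1 hN⟩
    · rintro ⟨hj, h⟩; exact ⟨(mem_hkN_iff_of_half_lt hr hy hj).2 h, hj⟩
  rw [← sum_filter_add_sum_filter_not _ fun j => 1 / 2 < y j, hseen]
  refine add_nonpos (sum_filter_le_sub_expect_nonpos _ _ _) (sum_nonpos fun j hj => ?_)
  linarith [not_lt.1 (mem_filter.1 hj).2, half_lt_highMean hhigh]

lemma hkN_eq_lowGroup (hr : ∀ i, 1 / 2 ≤ r i) (hy : ∀ i, y i ∈ Set.Icc (0 : ℝ) 1)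
    (h : ¬ IsLinked r y) (hi : y i ≤ 1 / 2) : hkN r y i = lowGroup y := by
  ext j
  rw [mem_lowGroup]
  constructor
  · intro hj
    by_contra hj'
    exact h ⟨i, i, self_mem_hkN (by linarith [hr i]), j, hj, hi, not_le.1 hj'⟩
  · intro hj
    exact (mem_hkN_iff_of_le_half hr hy hj).2 (by linarith [(hy j).1, hr i])

lemma hkN_eq_highGroup (hr : ∀ i, 1 / 2 ≤ r i) (hy : ∀ i, y i ∈ Set.Icc (0 : ℝ) 1)
    (h : ¬ IsLinked r y) (hi : 1 / 2 < y i) : hkN r y i = highGroup y := by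
  ext j
  rw [mem_highGroup]
  constructor
  · intro hj
    by_contra hj'
    exact h ⟨i, j, hj, i, self_mem_hkN (by linarith [hr i]), not_lt.1 hj', hi⟩
  · intro hj
    exact (mem_hkN_iff_of_half_lt hr hy hj).2 (by linarith [(hy j).2, hr i])

variable {x : ℕ → Fin n → ℝ}

lemma step_eq_expect (hHK : isHK r x) (t : ℕ) (i : Fin n) :
    x (t + 1) i = 𝔼 j ∈ hkN r (x t) i, x t j := by
  rw [hHK, expect_eq_sum_div_card]

lemma mem_Icc_of_isHK (hr : ∀ i, 0 ≤ r i) (hHK : isHK r x)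
    (hx0 : ∀ i, x 0 i ∈ Set.Icc (0 : ℝ) 1) (t : ℕ) (i : Fin n) :
    x t i ∈ Set.Icc (0 : ℝ) 1 := by
  induction t generalizing i with
  | zero => exact hx0 i
  | succ t ih =>
    rw [step_eq_expect hHK]
    exact ⟨le_expect ⟨i, self_mem_hkN (hr i)⟩ fun j _ => (ih j).1,
      expect_le ⟨i, self_mem_hkN (hr i)⟩ fun j _ => (ih j).2⟩

lemma stationary_of_succ_eq (hHK : isHK r x) {T : ℕ} (hT : x (T + 1) = x T) :
    ∀ t, T ≤ t → x t = x T := by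
  intro t ht
  induction t, ht using Nat.le_induction with
  | base => rfl
  | succ t _ ih => funext i; rw [hHK, ih, ← hHK, hT]

lemma exists_half_lt_sub_of_step_ne (hr : ∀ i, 1 / 2 ≤ r i) (hHK : isHK r x) {t : ℕ}
    (hne : x (t + 2) ≠ x (t + 1)) : ∃ i j, 1 / 2 < x t j - x t i := by
  by_contra! hclose
  have hall : ∀ i, hkN r (x t) i = univ := fun i => eq_univ_of_forall fun j =>
    mem_hkN.2 (abs_le.2 ⟨by linarith [hclose j i, hr i], by linarith [hclose i j, hr i]⟩)
  have hconst : ∀ i, x (t + 1) i = 𝔼 j, x t j := fun i => by rw [step_eq_expect hHK, hall]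
  refine hne (funext fun i => ?_)
  rw [step_eq_expect hHK, hconst, expect_congr rfl fun j _ => hconst j,
    expect_const ⟨i, self_mem_hkN (by linarith [hr i])⟩]

structure IsPolarizedRun (r : Fin n → ℝ) (x : ℕ → Fin n → ℝ) : Prop where
  half_le : ∀ i, 1 / 2 ≤ r i
  isHK : isHK r x
  mem_Icc : ∀ t i, x t i ∈ Set.Icc (0 : ℝ) 1
  spread : ∀ t, ∃ i j, 1 / 2 < x t j - x t i

noncomputable def meanGap (x : ℕ → Fin n → ℝ) (t : ℕ) : ℝ :=
  highMean (x t) - lowMean (x t)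

namespace IsPolarizedRun

lemma lowGroup_nonempty (P : IsPolarizedRun r x) (t : ℕ) : (lowGroup (x t)).Nonempty := by
  obtain ⟨i, j, h⟩ := P.spread t
  exact ⟨i, mem_lowGroup.2 (by linarith [(P.mem_Icc t j).2])⟩

lemma highGroup_nonempty (P : IsPolarizedRun r x) (t : ℕ) : (highGroup (x t)).Nonempty := by
  obtain ⟨i, j, h⟩ := P.spread t
  exact ⟨j, mem_highGroup.2 (by linarith [(P.mem_Icc t i).1])⟩

lemma lowMean_le (P : IsPolarizedRun r x) (t : ℕ) (i : Fin n) :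
    lowMean (x t) ≤ x (t + 1) i := by
  rw [step_eq_expect P.isHK]
  exact lowMean_le_expect_hkN P.half_le (P.mem_Icc t) (P.lowGroup_nonempty t) i

lemma le_highMean (P : IsPolarizedRun r x) (t : ℕ) (i : Fin n) :
    x (t + 1) i ≤ highMean (x t) := by
  rw [step_eq_expect P.isHK]
  exact expect_hkN_le_highMean P.half_le (P.mem_Icc t) (P.highGroup_nonempty t) i

lemma lowMean_mono (P : IsPolarizedRun r x) : Monotone fun t => lowMean (x t) :=
  monotone_nat_of_le_succ fun t =>
    le_expect (P.lowGroup_nonempty (t + 1)) fun i _ => P.lowMean_le t i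

lemma highMean_anti (P : IsPolarizedRun r x) : Antitone fun t => highMean (x t) :=
  antitone_nat_of_succ_le fun t =>
    expect_le (P.highGroup_nonempty (t + 1)) fun i _ => P.le_highMean t i

lemma meanGap_anti (P : IsPolarizedRun r x) : Antitone (meanGap x) :=
  fun _ _ hst => sub_le_sub (P.highMean_anti hst) (P.lowMean_mono hst)

lemma half_lt_meanGap (P : IsPolarizedRun r x) (t : ℕ) : 1 / 2 < meanGap x t := by
  obtain ⟨i, j, h⟩ := P.spread (t + 1)
  rw [meanGap]
  linarith [P.lowMean_le t i, P.le_highMean t j]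

lemma sub_lowMean_le (P : IsPolarizedRun r x) (t : ℕ) {s : Finset (Fin n)} (hj : j ∈ s) :
    x (t + 1) j - lowMean (x t) ≤ n * (𝔼 k ∈ s, x (t + 1) k - lowMean (x t)) :=
  (sub_le_card_mul_expect_sub (fun k _ => P.lowMean_le t k) hj).trans <|
    mul_le_mul_of_nonneg_right (cast_card_le s) <|
      sub_nonneg.2 <| le_expect ⟨j, hj⟩ fun k _ => P.lowMean_le t k

lemma highMean_sub_le (P : IsPolarizedRun r x) (t : ℕ) {s : Finset (Fin n)} (hj : j ∈ s) :
    highMean (x t) - x (t + 1) j ≤ n * (highMean (x t) - 𝔼 k ∈ s, x (t + 1) k) :=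
  (sub_le_card_mul_sub_expect (fun k _ => P.le_highMean t k) hj).trans <|
    mul_le_mul_of_nonneg_right (cast_card_le s) <|
      sub_nonneg.2 <| expect_le ⟨j, hj⟩ fun k _ => P.le_highMean t k

lemma step_of_not_isLinked (P : IsPolarizedRun r x) {t : ℕ} (h : ¬ IsLinked r (x t))
    (i : Fin n) :
    x (t + 1) i = if x t i ≤ 1 / 2 then lowMean (x t) else highMean (x t) := by
  rw [step_eq_expect P.isHK]
  split_ifs with hi
  · rw [hkN_eq_lowGroup P.half_le (P.mem_Icc t) h hi, lowMean]
  · rw [hkN_eq_highGroup P.half_le (P.mem_Icc t) h (not_le.1 hi), highMean]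

lemma step_eq_of_not_isLinked (P : IsPolarizedRun r x) {t : ℕ} (h₀ : ¬ IsLinked r (x t))
    (h₁ : ¬ IsLinked r (x (t + 1))) : x (t + 2) = x (t + 1) := by
  have hlow := lowMean_le_half (P.lowGroup_nonempty t)
  have hhigh := half_lt_highMean (P.highGroup_nonempty t)
  have hside : ∀ i, x (t + 1) i ≤ 1 / 2 ↔ x t i ≤ 1 / 2 := fun i => by
    rw [P.step_of_not_isLinked h₀]
    split_ifs with hi
    · exact iff_of_true hlow hi
    · exact iff_of_false (not_le.2 hhigh) hi
  have hlow' : lowMean (x (t + 1)) = lowMean (x t) := by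
    refine (expect_congr rfl fun i hi => ?_).trans (expect_const (P.lowGroup_nonempty (t + 1)) _)
    rw [P.step_of_not_isLinked h₀, if_pos ((hside i).1 (mem_lowGroup.1 hi))]
  have hhigh' : highMean (x (t + 1)) = highMean (x t) := by
    refine (expect_congr rfl fun i hi => ?_).trans (expect_const (P.highGroup_nonempty (t + 1)) _)
    rw [P.step_of_not_isLinked h₀,
      if_neg fun h => (not_le.2 (mem_highGroup.1 hi)) ((hside i).2 h)]
  funext i
  simp only [P.step_of_not_isLinked h₁ i, hside i, hlow', hhigh']
  exact (P.step_of_not_isLinked h₀ i).symm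

lemma sub_lowMean_le_of_le_half (P : IsPolarizedRun r x) (t : ℕ) (hj : x (t + 1) j ≤ 1 / 2) :
    x (t + 1) j - lowMean (x t) ≤ n * (lowMean (x (t + 1)) - lowMean (x t)) :=
  P.sub_lowMean_le t (mem_lowGroup.2 hj)

lemma highMean_sub_le_of_half_lt (P : IsPolarizedRun r x) (t : ℕ) (hj : 1 / 2 < x (t + 1) j) :
    highMean (x t) - x (t + 1) j ≤ n * (highMean (x t) - highMean (x (t + 1))) :=
  P.highMean_sub_le t (mem_highGroup.2 hj)

/-- An agent hearing both sides moves about `meanGap / n` away from the mean of either side,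
whereas every opinion stays within `n` times the last shrinkage of the means of its side's mean. -/
lemma not_isLinked_of_meanGap_sub_le (P : IsPolarizedRun r x) {s : ℕ} {δ : ℝ}
    (hδ : n * (n + 2) * δ ≤ 1 / 2) (h₀ : meanGap x s - meanGap x (s + 1) ≤ δ)
    (h₁ : meanGap x (s + 1) - meanGap x (s + 2) ≤ δ) : ¬ IsLinked r (x (s + 1)) := by
  rintro ⟨i, j, hj, k, hk, hjlow, hkhigh⟩
  have hstep : x (s + 2) i = 𝔼 m ∈ hkN r (x (s + 1)) i, x (s + 1) m :=
    step_eq_expect P.isHK _ i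
  have hk' := P.sub_lowMean_le s hk
  have hj' := P.highMean_sub_le s hj
  rw [← hstep] at hk' hj'
  have hkc := P.highMean_sub_le_of_half_lt s hkhigh
  have hjc := P.sub_lowMean_le_of_le_half s hjlow
  have ha : lowMean (x (s + 1)) ≤ lowMean (x (s + 2)) := P.lowMean_mono (s + 1).le_succ
  have hb : highMean (x (s + 2)) ≤ highMean (x (s + 1)) := P.highMean_anti (s + 1).le_succ
  have hgap := P.half_lt_meanGap s
  have hδ₀ : 0 ≤ δ := (sub_nonneg.2 (P.meanGap_anti s.le_succ)).trans h₀
  simp only [meanGap] at h₀ h₁ hgap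
  have hn : (0 : ℝ) ≤ n := n.cast_nonneg
  rcases le_or_gt (x (s + 2) i) (1 / 2) with hi | hi
  · have hic := P.sub_lowMean_le_of_le_half (s + 1) hi
    have hδ₁ : lowMean (x (s + 2)) - lowMean (x (s + 1)) ≤ δ := by linarith
    linarith [mul_le_mul_of_nonneg_left hic hn, mul_nonneg hn (sub_nonneg.2 h₀),
      mul_nonneg hn hδ₀, mul_nonneg (mul_nonneg hn hn) (sub_nonneg.2 hδ₁)]
  · have hic := P.highMean_sub_le_of_half_lt (s + 1) hi
    have hδ₁ : highMean (x (s + 1)) - highMean (x (s + 2)) ≤ δ := by linarith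
    linarith [mul_le_mul_of_nonneg_left hic hn, mul_nonneg hn (sub_nonneg.2 h₀),
      mul_nonneg hn hδ₀, mul_nonneg (mul_nonneg hn hn) (sub_nonneg.2 hδ₁)]

lemma eventually_not_isLinked (P : IsPolarizedRun r x) :
    ∀ᶠ t in atTop, ¬ IsLinked r (x (t + 1)) := by
  set δ : ℝ := 1 / (2 * (n + 1) * (n + 2))
  have hδ : n * (n + 2) * δ ≤ 1 / 2 := by
    rw [mul_one_div, div_le_div_iff₀ (by positivity) (by positivity)]
    nlinarith
  have hsmall : ∀ᶠ s in atTop, meanGap x s - meanGap x (s + 1) ≤ δ :=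
    (P.meanGap_anti.tendsto_sub_succ ⟨1 / 2, Set.forall_mem_range.2 fun t =>
      (P.half_lt_meanGap t).le⟩).eventually (eventually_le_nhds (by positivity))
  filter_upwards [hsmall, (tendsto_add_atTop_nat 1).eventually hsmall] with s h₀ h₁
  exact P.not_isLinked_of_meanGap_sub_le hδ h₀ h₁

end IsPolarizedRun

theorem exists_succ_eq (hr : ∀ i, 1 / 2 ≤ r i) (hHK : isHK r x)
    (hx0 : ∀ i, x 0 i ∈ Set.Icc (0 : ℝ) 1) : ∃ T, x (T + 1) = x T := by
  by_contra! hne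
  have P : IsPolarizedRun r x := ⟨hr, hHK, mem_Icc_of_isHK (fun i => by linarith [hr i]) hHK hx0,
    fun t => exists_half_lt_sub_of_step_ne hr hHK (hne (t + 1))⟩
  obtain ⟨T, hT⟩ := P.eventually_not_isLinked.exists_forall_of_atTop
  exact hne (T + 2) (P.step_eq_of_not_isLinked (hT T le_rfl) (hT (T + 1) T.le_succ))

end HK

theorem stmt_14_general (n : ℕ) (r : Fin n → ℝ) (x : ℕ → Fin n → ℝ)
    (hx0 : ∀ i, x 0 i ∈ Set.Icc (0 : ℝ) 1)
    (hHK : isHK r x)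
    (hhalf : ∀ i, (1 : ℝ) / 2 ≤ r i) :
    ∃ tstar : ℕ, ∃ xs : Fin n → ℝ, ∀ t, tstar ≤ t → ∀ i, x t i = xs i := by
  obtain ⟨T, hT⟩ := HK.exists_succ_eq hhalf hHK hx0
  exact ⟨T, x T, fun t ht i => by rw [HK.stationary_of_succ_eq hHK hT t ht]⟩

theorem stmt_14 (n : ℕ) (hn : 0 < n) (r : Fin n → ℝ) (x : ℕ → Fin n → ℝ)
    (hr : ∀ i, 0 < r i ∧ r i ≤ 1) (hx0 : ∀ i, x 0 i ∈ Set.Icc (0 : ℝ) 1)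
    (hHK : isHK r x)
    (hhalf : ∀ i, (1 : ℝ) / 2 ≤ r i) :
    ∃ tstar : ℕ, ∃ xs : Fin n → ℝ, ∀ t, tstar ≤ t → ∀ i, x t i = xs i :=
  stmt_14_general n r x hx0 hHK hhalf
end

section
/- In the homogeneous HK dynamics (all r_i = r), the opinions are order-preserving: if x_i(0) ≤ x_j(0), then x_i(t) ≤ x_j(t) for all t ≥ 0. -/
open Finset Filter Topology

lemma avg_le_avg {n : ℕ} (f : Fin n → ℝ) (A B : Finset (Fin n))
    (hA : A.Nonempty) (hB : B.Nonempty)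
    (h1 : ∀ k ∈ A, k ∉ B → ∀ l ∈ B, f k ≤ f l)
    (h2 : ∀ l ∈ B, l ∉ A → ∀ k ∈ A, f k ≤ f l) :
    (∑ k ∈ A, f k) / (A.card : ℝ) ≤ (∑ l ∈ B, f l) / (B.card : ℝ) := by
  have hAc : (0:ℝ) < A.card := by exact_mod_cast hA.card_pos
  have hBc : (0:ℝ) < B.card := by exact_mod_cast hB.card_pos
  rw [div_le_div_iff₀ hAc hBc]
  have key : ∑ p ∈ A ×ˢ B, (f p.1 - f p.2) ≤ 0 := by
    have hsub : (A ∩ B) ×ˢ (A ∩ B) ⊆ A ×ˢ B :=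
      Finset.product_subset_product inter_subset_left inter_subset_right
    rw [← Finset.sum_sdiff hsub]
    have h0 : ∑ p ∈ (A ∩ B) ×ˢ (A ∩ B), (f p.1 - f p.2) = 0 := by
      rw [Finset.sum_product]
      simp [Finset.sum_sub_distrib]
      rw [← Finset.mul_sum]
      ring
    have hD : ∑ p ∈ (A ×ˢ B) \ ((A ∩ B) ×ˢ (A ∩ B)), (f p.1 - f p.2) ≤ 0 := by
      apply Finset.sum_nonpos
      intro p hp
      rw [Finset.mem_sdiff, Finset.mem_product, Finset.mem_product] at hp
      obtain ⟨⟨h1A, h2B⟩, hnot⟩ := hp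
      have : p.1 ∉ B ∨ p.2 ∉ A := by
        by_contra h
        push_neg at h
        exact hnot ⟨Finset.mem_inter.2 ⟨h1A, h.1⟩, Finset.mem_inter.2 ⟨h.2, h2B⟩⟩
      rcases this with h | h
      · linarith [h1 p.1 h1A h p.2 h2B]
      · linarith [h2 p.2 h2B h p.1 h1A]
    linarith
  have e1 : ∑ p ∈ A ×ˢ B, (f p.1 - f p.2)
      = (B.card : ℝ) * ∑ k ∈ A, f k - (A.card : ℝ) * ∑ l ∈ B, f l := by
    rw [Finset.sum_product]
    simp [Finset.sum_sub_distrib, Finset.mul_sum]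
  rw [e1] at key
  linarith

theorem stmt_15 (n : ℕ) (hn : 0 < n) (r : ℝ) (x : ℕ → Fin n → ℝ)
    (hr : 0 < r ∧ r ≤ 1) (hx0 : ∀ i, x 0 i ∈ Set.Icc (0 : ℝ) 1)
    (hHK : isHK (fun _ => r) x) :
    ∀ i j : Fin n, x 0 i ≤ x 0 j → ∀ t, x t i ≤ x t j := by
  intro i j h0 t
  induction t with
  | zero => exact h0
  | succ t ih =>
    rw [hHK t i, hHK t j]
    set f := x t
    have hmemA : ∀ k, k ∈ hkN (fun _ => r) f i ↔ |f k - f i| ≤ r := by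
      intro k; simp [hkN]
    have hmemB : ∀ k, k ∈ hkN (fun _ => r) f j ↔ |f k - f j| ≤ r := by
      intro k; simp [hkN]
    apply avg_le_avg
    · exact ⟨i, (hmemA i).2 (by simp [abs_nonneg]; linarith [hr.1])⟩
    · exact ⟨j, (hmemB j).2 (by simp [abs_nonneg]; linarith [hr.1])⟩
    · intro k hk hkB l hl
      rw [hmemA k] at hk
      rw [hmemB l] at hl
      rw [hmemB k] at hkB
      rw [abs_le] at hk hl
      rw [not_le, lt_abs] at hkB
      rcases hkB with h | h
      · linarith
      · linarith
    · intro l hl hlA k hk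
      rw [hmemA k] at hk
      rw [hmemB l] at hl
      rw [hmemA l] at hlA
      rw [abs_le] at hk hl
      rw [not_le, lt_abs] at hlA
      rcases hlA with h | h
      · linarith
      · linarith
end

section
/- Consider the 3-agent heterogeneous HK system with x(0) = (0.1, 0.4, 0.8) and confidence bounds r = (0.1, 0.4, 0.1). Then x_1(t) = 0.1 and x_3(t) = 0.8 for all t ≥ 0, and x_2(t) → 0.45 as t → ∞ but x_2(t) ≠ 0.45 for every finite t. -/
open Finset Filter Topology

lemma hkSets (y : Fin 3 → ℝ) (h0 : y 0 = 0.1) (h2 : y 2 = 0.8)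
    (hb1 : 0.4 ≤ y 1) (hb2 : y 1 ≤ 0.45) :
    hkN ![0.1, 0.4, 0.1] y 0 = {0} ∧ hkN ![0.1, 0.4, 0.1] y 1 = Finset.univ ∧
      hkN ![0.1, 0.4, 0.1] y 2 = {2} := by
  refine ⟨?_, ?_, ?_⟩ <;> ext j <;> fin_cases j <;>
    simp [hkN, h0, h2, abs_le] <;> norm_num <;> (try constructor) <;> intros <;> linarith

theorem stmt_16 (x : ℕ → Fin 3 → ℝ)
    (hx0 : x 0 = ![0.1, 0.4, 0.8])
    (hHK : isHK ![0.1, 0.4, 0.1] x) :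
    (∀ t, x t 0 = 0.1 ∧ x t 2 = 0.8) ∧
      Tendsto (fun t => x t 1) atTop (𝓝 0.45) ∧
      ∀ t, x t 1 ≠ 0.45 := by
  have key : ∀ t, x t 0 = 0.1 ∧ x t 2 = 0.8 ∧ x t 1 = 0.45 - 0.05 * (1/3 : ℝ) ^ t := by
    intro t
    induction t with
    | zero => simp [hx0]; norm_num
    | succ t ih =>
      obtain ⟨h0, h2, h1⟩ := ih
      have hq0 : (0:ℝ) ≤ (1/3 : ℝ) ^ t := by positivity
      have hq1 : (1/3 : ℝ) ^ t ≤ 1 := pow_le_one₀ (by norm_num) (by norm_num)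
      obtain ⟨s0, s1, s2⟩ := hkSets (x t) h0 h2 (by rw [h1]; linarith) (by rw [h1]; linarith)
      have e0 := hHK t 0
      have e1 := hHK t 1
      have e2 := hHK t 2
      rw [s0] at e0; rw [s1] at e1; rw [s2] at e2
      simp [Fin.sum_univ_three] at e0 e1 e2
      refine ⟨by rw [e0, h0], by rw [e2, h2], ?_⟩
      rw [e1, h0, h1, h2]
      ring
  refine ⟨fun t => ⟨(key t).1, (key t).2.1⟩, ?_, ?_⟩
  · have : Tendsto (fun t : ℕ => 0.45 - 0.05 * (1/3 : ℝ) ^ t) atTop (𝓝 (0.45 - 0.05 * 0)) := by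
      exact (tendsto_const_nhds.sub (tendsto_const_nhds.mul
        (tendsto_pow_atTop_nhds_zero_of_lt_one (by norm_num) (by norm_num))))
    simp only [mul_zero, sub_zero] at this
    refine this.congr fun t => ((key t).2.2).symm
  · intro t h
    have := (key t).2.2
    rw [h] at this
    have hq : (0:ℝ) < (1/3 : ℝ) ^ t := by positivity
    nlinarith
end

section
/- In the heterogeneous HK dynamics, with c = lim x_min(t), r = min_i r_i, ε ∈ (0, r/n²), and V¹_ε(t) = {i : c − ε < x_i(t) ≤ c + (n−1)ε}: there exists T such that for all t ≥ T, V¹_ε(t+1) ⊆ V¹_ε(t), and moreover V¹_ε(t) is nonempty for all t ≥ T. -/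
open Finset Filter Topology

theorem stmt_17 (n : ℕ) (hn : 0 < n) (r : Fin n → ℝ) (x : ℕ → Fin n → ℝ)
    (hr : ∀ i, 0 < r i ∧ r i ≤ 1) (hx0 : ∀ i, x 0 i ∈ Set.Icc (0 : ℝ) 1)
    (hHK : isHK r x) (c ε : ℝ)
    (hc : Tendsto (fun t => ⨅ i, x t i) atTop (𝓝 c))
    (hε : 0 < ε ∧ ε < (⨅ i, r i) / n ^ 2) :
    ∃ T : ℕ, ∀ t, T ≤ t →
      (∀ i : Fin n, (c - ε < x (t + 1) i ∧ x (t + 1) i ≤ c + ((n : ℝ) - 1) * ε) →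
        (c - ε < x t i ∧ x t i ≤ c + ((n : ℝ) - 1) * ε)) ∧
      ∃ i : Fin n, c - ε < x t i ∧ x t i ≤ c + ((n : ℝ) - 1) * ε := by
  obtain ⟨hε0, hεr⟩ := hε
  haveI : Nonempty (Fin n) := Fin.pos_iff_nonempty.mp hn
  have hn1 : (1:ℝ) ≤ (n:ℝ) := by exact_mod_cast hn
  -- basic facts about the infimum
  have hle : ∀ t j, (⨅ k, x t k) ≤ x t j := fun t j =>
    ciInf_le (Set.finite_range (x t)).bddBelow j
  have hatt : ∀ t, ∃ i, x t i = ⨅ k, x t k := by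
    intro t
    obtain ⟨i, hi⟩ := Finite.exists_min (x t)
    exact ⟨i, le_antisymm (le_ciInf hi) (hle t i)⟩
  -- self membership / card facts
  have hself : ∀ t i, i ∈ hkN r (x t) i := by
    intro t i
    simp only [hkN, Finset.mem_filter, Finset.mem_univ, true_and, sub_self, abs_zero]
    exact (hr i).1.le
  have hcardpos : ∀ t i, 0 < ((hkN r (x t) i).card : ℝ) := by
    intro t i
    exact_mod_cast Finset.card_pos.mpr ⟨i, hself t i⟩
  have hcardle : ∀ t i, ((hkN r (x t) i).card : ℝ) ≤ (n:ℝ) := by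
    intro t i
    have := Finset.card_le_univ (hkN r (x t) i)
    simp only [Finset.card_univ, Fintype.card_fin] at this
    exact_mod_cast this
  -- update identity
  have hupd : ∀ t i, x (t+1) i * ((hkN r (x t) i).card : ℝ) = ∑ j ∈ hkN r (x t) i, x t j := by
    intro t i
    rw [hHK t i, div_mul_cancel₀]
    exact (hcardpos t i).ne'
  -- key sum bound
  have hsum : ∀ t i j, j ∈ hkN r (x t) i →
      x t j + (((hkN r (x t) i).card : ℝ) - 1) * (⨅ k, x t k) ≤ ∑ k ∈ hkN r (x t) i, x t k := by
    intro t i j hj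
    rw [← Finset.add_sum_erase _ _ hj]
    have h1 : ((hkN r (x t) i).erase j).card • (⨅ k, x t k) ≤ ∑ k ∈ (hkN r (x t) i).erase j, x t k :=
      Finset.card_nsmul_le_sum _ _ _ (fun k _ => hle t k)
    rw [Finset.card_erase_of_mem hj, nsmul_eq_mul, Nat.cast_sub (Finset.card_pos.mpr ⟨j, hj⟩)] at h1
    push_cast at h1 ⊢
    linarith
  -- monotonicity of the minimum
  have hmono : Monotone (fun t => ⨅ k, x t k) := by
    apply monotone_nat_of_le_succ
    intro t
    apply le_ciInf
    intro i
    have h1 := Finset.card_nsmul_le_sum (hkN r (x t) i) (x t) (⨅ k, x t k) (fun k _ => hle t k)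
    rw [nsmul_eq_mul] at h1
    have h2 := hupd t i
    have h3 := hcardpos t i
    nlinarith
  have hub : ∀ s, (⨅ k, x s k) ≤ c := fun s => hmono.ge_of_tendsto hc s
  -- choose T
  have hev : ∀ᶠ t in atTop, c - ε < ⨅ k, x t k :=
    hc.eventually (eventually_gt_nhds (by linarith))
  obtain ⟨T, hT⟩ := eventually_atTop.mp hev
  refine ⟨T, fun t ht => ?_⟩
  have hmin_t : c - ε < ⨅ k, x t k := hT t ht
  constructor
  · rintro i ⟨-, h2⟩
    refine ⟨lt_of_lt_of_le hmin_t (hle t i), ?_⟩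
    by_contra hgt
    push_neg at hgt
    obtain ⟨i1, hi1⟩ := hatt (t+1)
    have h1c : x (t+1) i1 ≤ c := hi1 ▸ hub (t+1)
    -- every neighbor of i1 at time t is ≤ c + (n-1)ε
    have hneigh : ∀ j ∈ hkN r (x t) i1, x t j ≤ c + ((n:ℝ)-1)*ε := by
      intro j hj
      have hs := hsum t i1 j hj
      have hq := hupd t i1
      have hM1 : (1:ℝ) ≤ ((hkN r (x t) i1).card : ℝ) := by
        exact_mod_cast Finset.card_pos.mpr ⟨j, hj⟩
      have hMn := hcardle t i1
      set M := ((hkN r (x t) i1).card : ℝ) with hMdef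
      nlinarith [mul_le_mul_of_nonneg_right h1c (by linarith : (0:ℝ) ≤ M),
        mul_le_mul_of_nonneg_left hmin_t.le (by linarith : (0:ℝ) ≤ M - 1),
        mul_le_mul_of_nonneg_right hMn hε0.le]
    have hnotmem : i ∉ hkN r (x t) i1 := fun hmem => absurd (hneigh i hmem) (not_le.mpr hgt)
    have habs : r i1 < |x t i - x t i1| := by
      by_contra hh
      push_neg at hh
      exact hnotmem (by simp only [hkN, Finset.mem_filter, Finset.mem_univ, true_and]; exact hh)
    have hi1le : x t i1 ≤ c + ((n:ℝ)-1)*ε := hneigh i1 (hself t i1)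
    have hn2pos : (0:ℝ) < (n:ℝ)^2 := by positivity
    have hrinf : ε * (n:ℝ)^2 < ⨅ k, r k := by
      rw [← lt_div_iff₀ hn2pos]
      exact_mod_cast hεr
    have hri1 : (n:ℝ)^2 * ε < r i1 :=
      lt_of_lt_of_le (by linarith) (ciInf_le (Set.finite_range r).bddBelow i1)
    have habs' : (n:ℝ)^2 * ε < x t i - x t i1 := by
      have hlt : x t i1 < x t i := lt_of_le_of_lt hi1le hgt
      rw [abs_of_pos (by linarith)] at habs
      linarith
    have hxti : c - ε + (n:ℝ)^2 * ε < x t i := by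
      have := hle t i1
      linarith
    -- averaging bound for agent i
    have hs := hsum t i i (hself t i)
    have hq := hupd t i
    have hM1 : (1:ℝ) ≤ ((hkN r (x t) i).card : ℝ) := by
      exact_mod_cast Finset.card_pos.mpr ⟨i, hself t i⟩
    have hMn := hcardle t i
    set M := ((hkN r (x t) i).card : ℝ) with hMdef
    have hsq : ((n:ℝ))^2 = (n:ℝ) * (n:ℝ) := sq (n:ℝ)
    nlinarith [mul_le_mul_of_nonneg_right h2 (by linarith : (0:ℝ) ≤ M),
      mul_le_mul_of_nonneg_left hmin_t.le (by linarith : (0:ℝ) ≤ M - 1),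
      mul_le_mul_of_nonneg_right hMn (by positivity : (0:ℝ) ≤ (n:ℝ)*ε)]
  · obtain ⟨i0, hi0⟩ := hatt t
    have h1 : x t i0 ≤ c := hi0 ▸ hub t
    refine ⟨i0, ?_, ?_⟩
    · rw [hi0]; exact hmin_t
    · nlinarith
end
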